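/- arXiv:1407.2367 — 6 statements merged into one kernel-verified Lean document; each statement's English description precedes it below -/
import Mathlib

section
/- For every integer l ≥ 1 and every x ∈ [0,1], the Lidstone polynomial Λ_l satisfies Λ_l(x) = (−1)^l · (2/π^{2l+1}) · Σ_{n=1}^{∞} ((−1)^{n+1}/n^{2l+1}) · sin(nπx), where the series converges. -/
/-
The polynomial `-(2^(2l+1)/(2l+1)!) B_{2l+1}((1 - x)/2)` satisfies the Lidstone recursion
`Λ_l'' = Λ_{l-1}` because `B_{m+1}' = (m+1) B_m`. Substituting `y = (1 - x)/2` in the Fourier sine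
expansion of the odd Bernoulli polynomials (`hasSum_one_div_nat_pow_mul_sin`) gives exactly the
stated series for it, so in particular it vanishes at `0` and `1`, where every sine term vanishes.
A polynomial with vanishing second derivative and zeros at `0` and `1` is zero, so by induction on
`l` this polynomial is the only solution of the recursion.
-/

/-- The defining property of the sequence of Lidstone polynomial functions. -/
def LidstoneProp (Λ : ℕ → ℝ → ℝ) : Prop :=
  (∀ l : ℕ, ∃ P : Polynomial ℝ, ∀ x : ℝ, Λ l x = P.eval x) ∧
  (∀ x : ℝ, Λ 0 x = x) ∧
  (∀ l : ℕ, (∀ x : ℝ, iteratedDeriv 2 (Λ (l + 1)) x = Λ l x) ∧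
    Λ (l + 1) 0 = 0 ∧ Λ (l + 1) 1 = 0)

open Polynomial Real
open scoped Nat

namespace Polynomial

theorem iteratedDeriv_eval {𝕜 : Type*} [NontriviallyNormedField 𝕜] (p : 𝕜[X]) (n : ℕ) :
    iteratedDeriv n (fun x => p.eval x) = fun x => (derivative^[n] p).eval x := by
  induction n with
  | zero => simp
  | succ n ih =>
    ext x
    rw [iteratedDeriv_succ, ih, Function.iterate_succ_apply']
    exact Polynomial.deriv _

theorem eq_zero_of_derivative_derivative_eq_zero {R : Type*} [CommRing R] [IsDomain R]
    [CharZero R] {p : R[X]} (h : derivative (derivative p) = 0) (h0 : p.eval 0 = 0)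
    (h1 : p.eval 1 = 0) : p = 0 := by
  have hdeg : p.natDegree < 2 := by
    have := derivative_eq_zero.mp h
    rw [natDegree_derivative] at this
    omega
  classical
  refine eq_zero_of_natDegree_lt_card_of_eval_eq_zero' p {0, 1} ?_ ?_
  · simp [h0, h1]
  · simpa using hdeg

end Polynomial

noncomputable def halfReflectedBernoulli (m : ℕ) : ℝ[X] :=
  ((Polynomial.bernoulli m).map (algebraMap ℚ ℝ)).comp (C 2⁻¹ * (1 - X))

theorem eval_halfReflectedBernoulli (m : ℕ) (x : ℝ) :
    (halfReflectedBernoulli m).eval x = bernoulliFun m ((1 - x) / 2) := by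
  simp only [halfReflectedBernoulli, bernoulliFun, eval_comp, eval_mul, eval_C, eval_sub, eval_one,
    eval_X]
  ring_nf

theorem derivative_halfReflectedBernoulli_succ (m : ℕ) :
    derivative (halfReflectedBernoulli (m + 1)) =
      C (-((m + 1) / 2 : ℝ)) * halfReflectedBernoulli m := by
  rw [halfReflectedBernoulli, halfReflectedBernoulli, derivative_comp, derivative_map,
    derivative_bernoulli_add_one, ← neg_div, div_eq_mul_inv]
  simp only [derivative_mul, derivative_C, derivative_sub, derivative_one, derivative_X,
    Polynomial.map_mul, Polynomial.map_add, Polynomial.map_natCast, Polynomial.map_one, mul_comp,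
    add_comp, natCast_comp, one_comp, C_neg, C_mul, C_add, C_1, map_natCast]
  ring

noncomputable def lidstonePoly (l : ℕ) : ℝ[X] :=
  C (-(2 ^ (2 * l + 1) / (2 * l + 1)! : ℝ)) * halfReflectedBernoulli (2 * l + 1)

theorem lidstonePoly_zero : lidstonePoly 0 = X := by
  refine Polynomial.funext fun x => ?_
  rw [lidstonePoly, eval_mul, eval_C, eval_halfReflectedBernoulli, bernoulliFun_one, eval_X]
  norm_num
  ring

theorem derivative_derivative_lidstonePoly_succ (l : ℕ) :
    derivative (derivative (lidstonePoly (l + 1))) = lidstonePoly l := by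
  rw [lidstonePoly, lidstonePoly, show 2 * (l + 1) + 1 = 2 * l + 1 + 1 + 1 by ring,
    derivative_C_mul, derivative_C_mul, derivative_halfReflectedBernoulli_succ, derivative_C_mul,
    derivative_halfReflectedBernoulli_succ, ← mul_assoc, ← mul_assoc, ← C_mul, ← C_mul]
  congr 2
  push_cast [Nat.factorial_succ]
  field_simp
  ring

theorem hasSum_sine_series_lidstonePoly {l : ℕ} (hl : l ≠ 0) {x : ℝ} (hx : x ∈ Set.Icc 0 1) :
    HasSum (fun n : ℕ => ((-1 : ℝ) ^ (n + 1 + 1) / ((n : ℝ) + 1) ^ (2 * l + 1)) *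
        sin (((n : ℝ) + 1) * π * x))
      ((-1) ^ l * π ^ (2 * l + 1) / 2 * (lidstonePoly l).eval x) := by
  have hy : (1 - x) / 2 ∈ Set.Icc (0 : ℝ) 1 := ⟨by linarith [hx.2], by linarith [hx.1]⟩
  have h := hasSum_one_div_nat_pow_mul_sin hl hy
  rw [← Nat.succ_injective.hasSum_iff fun n hn => by simp_all] at h
  convert h using 1
  · ext n
    have hsin : sin (2 * π * (n + 1 : ℕ) * ((1 - x) / 2)) =
        -((-1) ^ (n + 1) * sin (((n : ℝ) + 1) * π * x)) := by
      rw [← sin_nat_mul_pi_sub]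
      push_cast
      ring_nf
    simp only [Function.comp_apply, Nat.succ_eq_add_one, hsin]
    push_cast
    ring
  · rw [lidstonePoly, eval_mul, eval_C, eval_halfReflectedBernoulli, bernoulliFun, pow_succ,
      mul_pow]
    ring

theorem eval_zero_lidstonePoly {l : ℕ} (hl : l ≠ 0) : (lidstonePoly l).eval 0 = 0 := by
  have h := hasSum_sine_series_lidstonePoly hl ⟨le_rfl, zero_le_one⟩
  simp only [mul_zero, sin_zero] at h
  simpa [pi_ne_zero] using h.unique hasSum_zero

theorem eval_one_lidstonePoly {l : ℕ} (hl : l ≠ 0) : (lidstonePoly l).eval 1 = 0 := by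
  have h := hasSum_sine_series_lidstonePoly hl ⟨zero_le_one, le_rfl⟩
  simp only [mul_one, ← Nat.cast_succ, sin_nat_mul_pi, mul_zero] at h
  simpa [pi_ne_zero] using h.unique hasSum_zero

theorem LidstoneProp.eq_eval_lidstonePoly {Λ : ℕ → ℝ → ℝ} (hΛ : LidstoneProp Λ) (l : ℕ)
    (x : ℝ) : Λ l x = (lidstonePoly l).eval x := by
  induction l generalizing x with
  | zero => rw [hΛ.2.1, lidstonePoly_zero, eval_X]
  | succ l ih =>
    obtain ⟨P, hP⟩ := hΛ.1 (l + 1)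
    obtain ⟨hderiv, h0, h1⟩ := hΛ.2.2 l
    have hP'' : derivative (derivative P) = derivative (derivative (lidstonePoly (l + 1))) := by
      refine Polynomial.funext fun y => ?_
      have := hderiv y
      rwa [funext hP, iteratedDeriv_eval, ih, ← derivative_derivative_lidstonePoly_succ] at this
    have hdiff : P - lidstonePoly (l + 1) = 0 := by
      refine eq_zero_of_derivative_derivative_eq_zero ?_ ?_ ?_
      · rw [derivative_sub, derivative_sub, hP'', sub_self]
      · rw [eval_sub, ← hP, h0, eval_zero_lidstonePoly l.succ_ne_zero, sub_self]
      · rw [eval_sub, ← hP, h1, eval_one_lidstonePoly l.succ_ne_zero, sub_self]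
    rw [hP, sub_eq_zero.mp hdiff]

/-- For `l ≥ 1` and `x ∈ [0,1]`,
`Λ_l(x) = (-1)^l (2/π^(2l+1)) ∑_{n=1}^∞ ((-1)^(n+1)/n^(2l+1)) sin(nπx)`,
the series (here indexed by `n ↦ n+1` over `ℕ`) being convergent. -/
theorem lidstone_polynomial_sine_series (Λ : ℕ → ℝ → ℝ) (hΛ : LidstoneProp Λ)
    (l : ℕ) (hl : 1 ≤ l) (x : ℝ) (hx : x ∈ Set.Icc (0 : ℝ) 1) :
    Summable (fun n : ℕ =>
      ((-1 : ℝ) ^ (n + 1 + 1) / ((n : ℝ) + 1) ^ (2 * l + 1)) *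
        Real.sin (((n : ℝ) + 1) * Real.pi * x)) ∧
    Λ l x = (-1 : ℝ) ^ l * (2 / Real.pi ^ (2 * l + 1)) *
      ∑' n : ℕ, ((-1 : ℝ) ^ (n + 1 + 1) / ((n : ℝ) + 1) ^ (2 * l + 1)) *
        Real.sin (((n : ℝ) + 1) * Real.pi * x) := by
  have h := hasSum_sine_series_lidstonePoly (l := l) (by omega) hx
  refine ⟨h.summable, ?_⟩
  rw [hΛ.eq_eval_lidstonePoly, h.tsum_eq]
  have hsign : (-1 : ℝ) ^ l * (-1) ^ l = 1 := by rw [← mul_pow]; norm_num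
  field_simp
  linear_combination -(lidstonePoly l).eval x * hsign
end

section
/- For every integer l ≥ 1 and every x ∈ [0,1], the Lidstone polynomial Λ_l satisfies |Λ_l(x)| ≤ 1/(3π^{2l−1}). -/
/-!
By the maximum principle, if `u` and `w` vanish at `0` and `1` and `|u''| ≤ -w''` on `(0, 1)`,
then `w ± u` are concave with zero boundary values, hence `|u| ≤ w` on `[0, 1]`. Since
`-(sin πx)'' = π² sin πx`, applying this to `u = Λ_{m+2}`, `u'' = Λ_{m+1}` propagates the bound
`|Λ_{m+1}(x)| ≤ sin(πx) / (3π^(2m+1))` from `m` to `m + 1`. It starts at `m = 0` from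
`|Λ_1(x)| ≤ (x - x³)/6` and the elementary inequality `π (x - x³) ≤ 2 sin πx`.
-/

open Real Set

section Comparison

variable {f u w : ℝ → ℝ} {a b : ℝ}

theorem nonneg_on_Icc_of_iteratedDeriv_two_nonpos (hf : ContDiff ℝ 2 f)
    (hf'' : ∀ x ∈ Ioo a b, iteratedDeriv 2 f x ≤ 0) (ha : 0 ≤ f a) (hb : 0 ≤ f b) :
    ∀ x ∈ Icc a b, 0 ≤ f x := by
  have hconc : ConcaveOn ℝ (Icc a b) f := by
    refine concaveOn_of_deriv2_nonpos (convex_Icc a b) hf.continuous.continuousOn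
      (hf.differentiable (by norm_num)).differentiableOn ?_ ?_
    · simpa only [iteratedDeriv_one] using
        (hf.differentiable_iteratedDeriv 1 (by norm_num)).differentiableOn
    · simpa only [interior_Icc, iteratedDeriv_eq_iterate] using hf''
  intro x hx
  have hab : a ≤ b := hx.1.trans hx.2
  exact (le_min ha hb).trans
    (hconc.min_le_of_mem_Icc (left_mem_Icc.2 hab) (right_mem_Icc.2 hab) hx)

theorem abs_le_on_Icc_of_abs_iteratedDeriv_two_le (hu : ContDiff ℝ 2 u) (hw : ContDiff ℝ 2 w)
    (h'' : ∀ x ∈ Ioo a b, |iteratedDeriv 2 u x| ≤ -iteratedDeriv 2 w x)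
    (ha : |u a| ≤ w a) (hb : |u b| ≤ w b) : ∀ x ∈ Icc a b, |u x| ≤ w x := by
  have hsub := nonneg_on_Icc_of_iteratedDeriv_two_nonpos (hw.sub hu)
    (fun x hx => by
      rw [iteratedDeriv_fun_sub hw.contDiffAt hu.contDiffAt]
      linarith [neg_abs_le (iteratedDeriv 2 u x), h'' x hx])
    (sub_nonneg.2 ((le_abs_self _).trans ha)) (sub_nonneg.2 ((le_abs_self _).trans hb))
  have hadd := nonneg_on_Icc_of_iteratedDeriv_two_nonpos (hw.add hu)
    (fun x hx => by
      rw [iteratedDeriv_fun_add hw.contDiffAt hu.contDiffAt]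
      linarith [le_abs_self (iteratedDeriv 2 u x), h'' x hx])
    (by linarith [neg_abs_le (u a)] : 0 ≤ w a + u a)
    (by linarith [neg_abs_le (u b)] : 0 ≤ w b + u b)
  intro x hx
  exact abs_le.2 ⟨by linarith [hadd x hx], by linarith [hsub x hx]⟩

end Comparison

theorem iteratedDeriv_two_sub_cube_div_six (x : ℝ) :
    iteratedDeriv 2 (fun x : ℝ => (x - x ^ 3) / 6) x = -x := by
  have h1 : deriv (fun x : ℝ => (x - x ^ 3) / 6) = fun x => (1 - 3 * x ^ 2) / 6 := by
    ext y; simp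
  have h2 : deriv (fun x : ℝ => (1 - 3 * x ^ 2) / 6) = fun x => -x := by
    ext y; simp; ring
  rw [iteratedDeriv_succ, iteratedDeriv_one, h1, h2]

theorem iteratedDeriv_two_mul_sin_pi_mul (c x : ℝ) :
    iteratedDeriv 2 (fun x => c * sin (π * x)) x = -(c * π ^ 2 * sin (π * x)) := by
  rw [iteratedDeriv_const_mul_field, iteratedDeriv_comp_const_mul contDiff_sin]
  simp only [iteratedDeriv_add_one_sin, iteratedDeriv_one, deriv_cos']
  ring

theorem pi_mul_sub_cube_le_two_mul_sin_pi_mul {x : ℝ} (hx : x ∈ Icc (0 : ℝ) 1) :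
    π * (x - x ^ 3) ≤ 2 * sin (π * x) := by
  have hπ : π ^ 2 < 10 := by nlinarith [pi_pos, pi_lt_d2]
  -- `x (1 - x) (2 - x)` dominates `x - x³` on `[0, 1/2]` and equals it after `x ↦ 1 - x`, so
  -- both halves of `[0, 1]` reduce to this bound on `[0, 1/2]`, where `sin t ≥ t - t³/6` suffices.
  have half : ∀ t ∈ Icc (0 : ℝ) (1 / 2), π * (t * (1 - t) * (2 - t)) ≤ 2 * sin (π * t) := by
    rintro t ⟨ht0, ht1⟩
    have hsin := sin_ge_sub_cube (mul_nonneg pi_pos.le ht0)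
    have hfactor : 0 ≤ 3 - t - π ^ 2 * t / 3 := by
      nlinarith [mul_le_mul_of_nonneg_left ht1 (sq_nonneg π)]
    nlinarith [mul_nonneg (mul_nonneg pi_pos.le (sq_nonneg t)) hfactor]
  rcases le_total x (1 / 2) with hx2 | hx2
  · calc π * (x - x ^ 3) = π * (x * (1 - x) * (1 + x)) := by ring
      _ ≤ π * (x * (1 - x) * (2 - x)) := by
        gcongr
        · exact mul_nonneg hx.1 (by linarith [hx.2])
        · linarith
      _ ≤ 2 * sin (π * x) := half x ⟨hx.1, hx2⟩
  · calc π * (x - x ^ 3) = π * ((1 - x) * (1 - (1 - x)) * (2 - (1 - x))) := by ring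
      _ ≤ 2 * sin (π * (1 - x)) := half (1 - x) ⟨by linarith [hx.2], by linarith⟩
      _ = 2 * sin (π * x) := by rw [mul_one_sub, sin_pi_sub]

namespace LidstoneProp

variable {Λ : ℕ → ℝ → ℝ}

theorem contDiff (hΛ : LidstoneProp Λ) {n : WithTop ℕ∞} (l : ℕ) : ContDiff ℝ n (Λ l) := by
  obtain ⟨P, hP⟩ := hΛ.1 l
  rw [funext hP]
  simpa using P.contDiff_aeval (𝕜 := ℝ) n

theorem abs_le_sub_cube_div_six (hΛ : LidstoneProp Λ) :
    ∀ x ∈ Icc (0 : ℝ) 1, |Λ 1 x| ≤ (x - x ^ 3) / 6 := by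
  obtain ⟨hderiv2, hzero, hone⟩ := hΛ.2.2 0
  refine abs_le_on_Icc_of_abs_iteratedDeriv_two_le (hΛ.contDiff 1) (by fun_prop) ?_ ?_ ?_
  · intro x hx
    rw [hderiv2, hΛ.2.1, iteratedDeriv_two_sub_cube_div_six, neg_neg, abs_of_pos hx.1]
  · simp [hzero]
  · simp [hone]

theorem abs_le_sin_pi_mul (hΛ : LidstoneProp Λ) (m : ℕ) :
    ∀ x ∈ Icc (0 : ℝ) 1, |Λ (m + 1) x| ≤ sin (π * x) / (3 * π ^ (2 * m + 1)) := by
  induction m with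
  | zero =>
    intro x hx
    calc |Λ 1 x| ≤ (x - x ^ 3) / 6 := hΛ.abs_le_sub_cube_div_six x hx
      _ ≤ sin (π * x) / (3 * π) := by
        rw [div_le_div_iff₀ (by norm_num) (by positivity)]
        nlinarith [pi_mul_sub_cube_le_two_mul_sin_pi_mul hx]
      _ = sin (π * x) / (3 * π ^ (2 * 0 + 1)) := by norm_num
  | succ m ih =>
    have hc : (3 * π ^ (2 * m + 1))⁻¹ = (3 * π ^ (2 * (m + 1) + 1))⁻¹ * π ^ 2 := by
      rw [show 2 * (m + 1) + 1 = 2 * m + 1 + 2 by ring, pow_add]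
      field_simp
      ring
    obtain ⟨hderiv2, hzero, hone⟩ := hΛ.2.2 (m + 1)
    intro x hx
    simp only [div_eq_inv_mul]
    refine abs_le_on_Icc_of_abs_iteratedDeriv_two_le
      (w := fun y => (3 * π ^ (2 * (m + 1) + 1))⁻¹ * sin (π * y)) (hΛ.contDiff _)
      (by fun_prop) ?_ ?_ ?_ x hx
    · intro y hy
      rw [hderiv2, iteratedDeriv_two_mul_sin_pi_mul, neg_neg, ← hc, ← div_eq_inv_mul]
      exact ih y (Ioo_subset_Icc_self hy)
    · simp [hzero]
    · simp [hone]

end LidstoneProp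

/-- For `l ≥ 1` and `x ∈ [0,1]`, `|Λ_l(x)| ≤ 1/(3 π^(2l-1))`. -/
theorem lidstone_polynomial_bound (Λ : ℕ → ℝ → ℝ) (hΛ : LidstoneProp Λ)
    (l : ℕ) (hl : 1 ≤ l) (x : ℝ) (hx : x ∈ Set.Icc (0 : ℝ) 1) :
    |Λ l x| ≤ 1 / (3 * Real.pi ^ (2 * l - 1)) := by
  obtain ⟨m, rfl⟩ : ∃ m, l = m + 1 := ⟨l - 1, by omega⟩
  rw [show 2 * (m + 1) - 1 = 2 * m + 1 by omega]
  calc |Λ (m + 1) x| ≤ sin (π * x) / (3 * π ^ (2 * m + 1)) := hΛ.abs_le_sin_pi_mul m x hx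
    _ ≤ 1 / (3 * π ^ (2 * m + 1)) := by gcongr; exact sin_le_one _
end

section
/- Let x_0 < x_1 < ⋯ < x_N be a partition of [x_0,x_N], let a_n = (x_n − x_{n−1})/(x_N − x_0), b_n = (x_N x_{n−1} − x_0 x_n)/(x_N − x_0), L_n(x) = a_n x + b_n. Let α_1, …, α_N ∈ (−1,1), let q_n : [x_0,x_N] → ℝ be continuous, and let y_0, …, y_N ∈ ℝ satisfy the join-up conditions α_n y_0 + q_n(x_0) = y_{n−1} and α_n y_N + q_n(x_N) = y_n for each 1 ≤ n ≤ N. Then there exists a unique continuous function φ : [x_0,x_N] → ℝ such that φ(L_n(x)) = α_n φ(x) + q_n(x) for all x ∈ [x_0,x_N] and all 1 ≤ n ≤ N; moreover this φ satisfies φ(x_n) = y_n for 0 ≤ n ≤ N. -/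
/-!
The Read–Bajraktarević operator `T f z = α n * f (L n⁻¹ z) + q n (L n⁻¹ z)` for
`z ∈ [x (n - 1), x n]` maps continuous functions with `f (x 0) = y 0`, `f (x N) = y N` to such
functions, because the join-up conditions make neighbouring pieces agree at the nodes, and it
satisfies `|T f z - T g z| ≤ (max |α n|) * |f w - g w|` for some `w`. Banach's fixed point
theorem on the closed subspace of `C([x 0, x N], ℝ)` with these endpoint values gives a fixed
point, and the fixed points of `T` are exactly the continuous solutions of the functional
equation. Two continuous fixed points agree since their sup distance `M` satisfies
`M ≤ (max |α n|) * M`. Evaluating the equation at `t = x 0` and `t = x N` gives `φ (x n) = y n`.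
-/

open Set NNReal

noncomputable def intervalAffine (a b c d t : ℝ) : ℝ := c + (d - c) / (b - a) * (t - a)

section IntervalAffine

variable {a b c d : ℝ}

@[simp]
theorem intervalAffine_left : intervalAffine a b c d a = c := by
  simp [intervalAffine]

theorem intervalAffine_right (hab : a ≠ b) : intervalAffine a b c d b = d := by
  rw [intervalAffine, div_mul_cancel₀ _ (sub_ne_zero.2 hab.symm)]
  ring

theorem intervalAffine_intervalAffine (hab : a ≠ b) (hcd : c ≠ d) (t : ℝ) :
    intervalAffine c d a b (intervalAffine a b c d t) = t := by
  have hba := sub_ne_zero.2 hab.symm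
  have hdc := sub_ne_zero.2 hcd.symm
  simp only [intervalAffine]
  field_simp
  ring

theorem mapsTo_intervalAffine (hab : a < b) (hcd : c ≤ d) :
    MapsTo (intervalAffine a b c d) (Icc a b) (Icc c d) := by
  rintro t ⟨hat, htb⟩
  have hslope : 0 ≤ (d - c) / (b - a) := div_nonneg (sub_nonneg.2 hcd) (sub_nonneg.2 hab.le)
  refine ⟨le_add_of_nonneg_right (mul_nonneg hslope (sub_nonneg.2 hat)), ?_⟩
  calc intervalAffine a b c d t ≤ intervalAffine a b c d b := by
        unfold intervalAffine; gcongr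
    _ = d := intervalAffine_right hab.ne

theorem continuous_intervalAffine : Continuous (intervalAffine a b c d) := by
  unfold intervalAffine
  fun_prop

end IntervalAffine

theorem StrictMonoOn.Iic_apply_lt {β : Type*} [Preorder β] {x : ℕ → β} {N m n : ℕ}
    (hx : StrictMonoOn x (Iic N)) (hmn : m < n) (hnN : n ≤ N) : x m < x n :=
  hx (mem_Iic.2 (by omega)) (mem_Iic.2 hnN) hmn

section Glue

variable {x : ℕ → ℝ} {N : ℕ}

noncomputable def pieceIndex (x : ℕ → ℝ) (z : ℝ) : ℕ := sInf {n | 1 ≤ n ∧ z ≤ x n}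

theorem pieceIndex_spec (hN : 1 ≤ N) {z : ℝ} (hz : z ∈ Icc (x 0) (x N)) :
    1 ≤ pieceIndex x z ∧ pieceIndex x z ≤ N ∧
      z ∈ Icc (x (pieceIndex x z - 1)) (x (pieceIndex x z)) := by
  have hNmem : N ∈ {n | 1 ≤ n ∧ z ≤ x n} := ⟨hN, hz.2⟩
  obtain ⟨h1, hle⟩ : 1 ≤ pieceIndex x z ∧ z ≤ x (pieceIndex x z) := Nat.sInf_mem ⟨N, hNmem⟩
  refine ⟨h1, Nat.sInf_le hNmem, ?_, hle⟩
  rcases h1.eq_or_lt with h | h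
  · rw [← h]
    exact hz.1
  · have hprev : ¬(1 ≤ pieceIndex x z - 1 ∧ z ≤ x (pieceIndex x z - 1)) :=
      Nat.notMem_of_lt_sInf (Nat.sub_lt h.le one_pos)
    exact le_of_not_ge fun hle ↦ hprev ⟨by omega, hle⟩

noncomputable def glue (x : ℕ → ℝ) (g : ℕ → ℝ → ℝ) (z : ℝ) : ℝ := g (pieceIndex x z) z

theorem glue_eq_of_mem (hx : StrictMonoOn x (Iic N)) {g : ℕ → ℝ → ℝ}
    (hg : ∀ n, 1 ≤ n → n < N → g n (x n) = g (n + 1) (x n)) {n : ℕ} (hn : 1 ≤ n) (hnN : n ≤ N)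
    {z : ℝ} (hz : z ∈ Icc (x (n - 1)) (x n)) : glue x g z = g n z := by
  have hnmem : n ∈ {n | 1 ≤ n ∧ z ≤ x n} := ⟨hn, hz.2⟩
  obtain ⟨hm, hzm⟩ : 1 ≤ pieceIndex x z ∧ z ≤ x (pieceIndex x z) := Nat.sInf_mem ⟨n, hnmem⟩
  have hmn : pieceIndex x z ≤ n := Nat.sInf_le hnmem
  rw [glue]
  generalize pieceIndex x z = m at hm hzm hmn ⊢
  rcases hmn.eq_or_lt with rfl | hlt
  · rfl
  -- pieces `m < n` meet only if `m = n - 1`, at the node `x m`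
  obtain rfl : m = n - 1 := by
    by_contra hne
    have := hx.Iic_apply_lt (by omega : m < n - 1) (by omega)
    linarith [hz.1]
  obtain rfl : z = x (n - 1) := le_antisymm hzm hz.1
  rw [hg _ hm (by omega), Nat.sub_add_cancel hn]

theorem continuousOn_glue (hN : 1 ≤ N) (hx : StrictMonoOn x (Iic N)) {g : ℕ → ℝ → ℝ}
    (hg : ∀ n, 1 ≤ n → n < N → g n (x n) = g (n + 1) (x n))
    (hcont : ∀ n, 1 ≤ n → n ≤ N → ContinuousOn (g n) (Icc (x (n - 1)) (x n))) :
    ContinuousOn (glue x g) (Icc (x 0) (x N)) := by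
  have hcover : Icc (x 0) (x N) ⊆ ⋃ n : Finset.Icc 1 N, Icc (x (n - 1)) (x n) := fun z hz ↦ by
    obtain ⟨h1, hN', hmem⟩ := pieceIndex_spec hN hz
    exact mem_iUnion.2 ⟨⟨pieceIndex x z, Finset.mem_Icc.2 ⟨h1, hN'⟩⟩, hmem⟩
  refine ContinuousOn.mono ?_ hcover
  refine (locallyFinite_of_finite _).continuousOn_iUnion (fun _ ↦ isClosed_Icc) fun ⟨n, hn⟩ ↦ ?_
  obtain ⟨h1, hnN⟩ := Finset.mem_Icc.1 hn
  exact (hcont n h1 hnN).congr fun z hz ↦ glue_eq_of_mem hx hg h1 hnN hz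

end Glue

theorem eqOn_of_forall_exists_abs_sub_le {X : Type*} [TopologicalSpace X] {K : Set X}
    (hK : IsCompact K) {T : (X → ℝ) → X → ℝ} {c : ℝ≥0} (hc : c < 1)
    (hT : ∀ f g, ∀ z ∈ K, ∃ w ∈ K, |T f z - T g z| ≤ c * |f w - g w|) {φ ψ : X → ℝ}
    (hφ : ContinuousOn φ K) (hψ : ContinuousOn ψ K) (hφT : EqOn φ (T φ) K)
    (hψT : EqOn ψ (T ψ) K) : EqOn φ ψ K := by
  intro z hz
  obtain ⟨z₀, hz₀, hmax⟩ := hK.exists_isMaxOn ⟨z, hz⟩ (hφ.sub hψ).abs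
  obtain ⟨w, hw, hle⟩ := hT φ ψ z₀ hz₀
  have hM : |φ z₀ - ψ z₀| ≤ c * |φ z₀ - ψ z₀| :=
    calc |φ z₀ - ψ z₀| = |T φ z₀ - T ψ z₀| := by rw [← hφT hz₀, ← hψT hz₀]
      _ ≤ c * |φ w - ψ w| := hle
      _ ≤ c * |φ z₀ - ψ z₀| := mul_le_mul_of_nonneg_left (hmax hw) c.2
  have hM0 : |φ z₀ - ψ z₀| ≤ 0 := by
    nlinarith [abs_nonneg (φ z₀ - ψ z₀), (NNReal.coe_lt_coe.2 hc : (c : ℝ) < 1)]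
  have := (hmax hz).trans hM0
  exact sub_eq_zero.1 (abs_nonpos_iff.1 this)

theorem exists_eqOn_of_forall_exists_abs_sub_le {a b ya yb : ℝ} (hab : a < b)
    {T : (ℝ → ℝ) → ℝ → ℝ} {c : ℝ≥0} (hc : c < 1)
    (hTmaps : ∀ f, ContinuousOn f (Icc a b) → f a = ya → f b = yb →
      ContinuousOn (T f) (Icc a b) ∧ T f a = ya ∧ T f b = yb)
    (hT : ∀ f g, ∀ z ∈ Icc a b, ∃ w ∈ Icc a b, |T f z - T g z| ≤ c * |f w - g w|) :
    ∃ φ, ContinuousOn φ (Icc a b) ∧ φ a = ya ∧ φ b = yb ∧ EqOn φ (T φ) (Icc a b) := by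
  let E : C(Icc a b, ℝ) → ℝ → ℝ := fun F ↦ IccExtend hab.le F
  have hE : ∀ F, ContinuousOn (E F) (Icc a b) := fun F ↦ F.continuous.Icc_extend'.continuousOn
  let S : Set C(Icc a b, ℝ) := {F | E F a = ya ∧ E F b = yb}
  have hS : IsClosed S :=
    (isClosed_eq (continuous_eval_const _) continuous_const).inter
      (isClosed_eq (continuous_eval_const _) continuous_const)
  have : CompleteSpace S := hS.completeSpace_coe
  have : Nonempty S := ⟨⟨⟨fun t ↦ intervalAffine a b ya yb t,
    continuous_intervalAffine.comp continuous_subtype_val⟩,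
    by simp [E, IccExtend_left], by simp [E, IccExtend_right, intervalAffine_right hab.ne]⟩⟩
  let TS : S → S := fun F ↦ ⟨⟨(Icc a b).domRestrict (T (E F)),
      (hTmaps _ (hE F) F.2.1 F.2.2).1.domRestrict⟩,
    by
      obtain ⟨ha, hb⟩ := (hTmaps _ (hE F) F.2.1 F.2.2).2
      exact ⟨(IccExtend_left _ _).trans ha, (IccExtend_right _ _).trans hb⟩⟩
  have hTS : ContractingWith c TS := by
    refine ⟨hc, LipschitzWith.of_dist_le_mul fun F G ↦ ?_⟩
    rw [Subtype.dist_eq, Subtype.dist_eq, ContinuousMap.dist_le (by positivity)]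
    intro z
    obtain ⟨w, hw, hle⟩ := hT (E F) (E G) z z.2
    calc dist (T (E F) z) (T (E G) z) ≤ c * |E F w - E G w| := hle
      _ = c * dist (F.1 ⟨w, hw⟩) (G.1 ⟨w, hw⟩) := by
          simp only [E, IccExtend_of_mem _ _ hw, Real.dist_eq]
      _ ≤ c * dist F.1 G.1 := by gcongr; exact ContinuousMap.dist_apply_le_dist _
  let Φ := ContractingWith.fixedPoint TS hTS
  refine ⟨E Φ, hE Φ, Φ.2.1, Φ.2.2, fun z hz ↦ ?_⟩
  have hfix := congrArg (fun F : S ↦ F.1 ⟨z, hz⟩) (ContractingWith.fixedPoint_isFixedPt hTS)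
  simp only [E, IccExtend_of_mem _ _ hz]
  exact hfix.symm

section FractalInterpolation

variable {x : ℕ → ℝ} {N : ℕ} {α : ℕ → ℝ} {q : ℕ → ℝ → ℝ} {y : ℕ → ℝ} {f g ψ : ℝ → ℝ}

def SolvesFIFEquation (x : ℕ → ℝ) (N : ℕ) (α : ℕ → ℝ) (q : ℕ → ℝ → ℝ) (ψ : ℝ → ℝ) : Prop :=
  ∀ n, 1 ≤ n → n ≤ N → ∀ t ∈ Icc (x 0) (x N),
    ψ (intervalAffine (x 0) (x N) (x (n - 1)) (x n) t) = α n * ψ t + q n t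

/-- The `n`-th piece `α n * f (L_n⁻¹ z) + q n (L_n⁻¹ z)` of the Read–Bajraktarević operator. -/
noncomputable def fifPiece (x : ℕ → ℝ) (N : ℕ) (α : ℕ → ℝ) (q : ℕ → ℝ → ℝ) (f : ℝ → ℝ) (n : ℕ)
    (z : ℝ) : ℝ :=
  α n * f (intervalAffine (x (n - 1)) (x n) (x 0) (x N) z) +
    q n (intervalAffine (x (n - 1)) (x n) (x 0) (x N) z)

noncomputable def fifOperator (x : ℕ → ℝ) (N : ℕ) (α : ℕ → ℝ) (q : ℕ → ℝ → ℝ) (f : ℝ → ℝ) :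
    ℝ → ℝ :=
  glue x (fifPiece x N α q f)

theorem fifPiece_left {n : ℕ} (hf : f (x 0) = y 0) (hjoin : α n * y 0 + q n (x 0) = y (n - 1)) :
    fifPiece x N α q f n (x (n - 1)) = y (n - 1) := by
  rw [fifPiece, intervalAffine_left, hf, hjoin]

theorem fifPiece_right {n : ℕ} (hn : x (n - 1) ≠ x n) (hf : f (x N) = y N)
    (hjoin : α n * y N + q n (x N) = y n) : fifPiece x N α q f n (x n) = y n := by
  rw [fifPiece, intervalAffine_right hn, hf, hjoin]

theorem fifPiece_intervalAffine {n : ℕ} (hn : x (n - 1) ≠ x n) (h0N : x 0 ≠ x N) (t : ℝ) :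
    fifPiece x N α q f n (intervalAffine (x 0) (x N) (x (n - 1)) (x n) t) = α n * f t + q n t := by
  rw [fifPiece, intervalAffine_intervalAffine h0N hn]

theorem fifPiece_node (hx : StrictMonoOn x (Iic N))
    (hjoin : ∀ n, 1 ≤ n → n ≤ N →
      α n * y 0 + q n (x 0) = y (n - 1) ∧ α n * y N + q n (x N) = y n)
    (hf0 : f (x 0) = y 0) (hfN : f (x N) = y N) {n : ℕ} (hn : 1 ≤ n) (hnN : n < N) :
    fifPiece x N α q f n (x n) = fifPiece x N α q f (n + 1) (x n) := by
  have hlt : x (n - 1) < x n := hx.Iic_apply_lt (by omega) (by omega)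
  rw [fifPiece_right hlt.ne hfN (hjoin n hn hnN.le).2]
  simpa using (fifPiece_left hf0 (hjoin (n + 1) (by omega) hnN).1).symm

theorem continuousOn_fifPiece {n : ℕ} (hn : x (n - 1) < x n) (h0N : x 0 ≤ x N)
    (hf : ContinuousOn f (Icc (x 0) (x N))) (hq : ContinuousOn (q n) (Icc (x 0) (x N))) :
    ContinuousOn (fifPiece x N α q f n) (Icc (x (n - 1)) (x n)) := by
  have hmaps := mapsTo_intervalAffine hn h0N
  have hinv : ContinuousOn (intervalAffine (x (n - 1)) (x n) (x 0) (x N)) (Icc (x (n - 1)) (x n)) :=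
    continuous_intervalAffine.continuousOn
  exact (continuousOn_const.mul (hf.comp hinv hmaps)).add (hq.comp hinv hmaps)

theorem fifOperator_eq_fifPiece (hx : StrictMonoOn x (Iic N))
    (hjoin : ∀ n, 1 ≤ n → n ≤ N →
      α n * y 0 + q n (x 0) = y (n - 1) ∧ α n * y N + q n (x N) = y n)
    (hf0 : f (x 0) = y 0) (hfN : f (x N) = y N) {n : ℕ} (hn : 1 ≤ n) (hnN : n ≤ N) {z : ℝ}
    (hz : z ∈ Icc (x (n - 1)) (x n)) : fifOperator x N α q f z = fifPiece x N α q f n z :=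
  glue_eq_of_mem hx (fun _ hm hmN ↦ fifPiece_node hx hjoin hf0 hfN hm hmN) hn hnN hz

theorem continuousOn_fifOperator (hN : 1 ≤ N) (hx : StrictMonoOn x (Iic N))
    (hq : ∀ n, 1 ≤ n → n ≤ N → ContinuousOn (q n) (Icc (x 0) (x N)))
    (hjoin : ∀ n, 1 ≤ n → n ≤ N →
      α n * y 0 + q n (x 0) = y (n - 1) ∧ α n * y N + q n (x N) = y n)
    (hf : ContinuousOn f (Icc (x 0) (x N))) (hf0 : f (x 0) = y 0) (hfN : f (x N) = y N) :
    ContinuousOn (fifOperator x N α q f) (Icc (x 0) (x N)) :=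
  continuousOn_glue hN hx (fun _ hm hmN ↦ fifPiece_node hx hjoin hf0 hfN hm hmN)
    fun n hn hnN ↦ continuousOn_fifPiece (hx.Iic_apply_lt (by omega) (by omega))
      (hx.Iic_apply_lt (by omega) le_rfl).le hf (hq n hn hnN)

theorem fifOperator_endpoints (hN : 1 ≤ N) (hx : StrictMonoOn x (Iic N))
    (hjoin : ∀ n, 1 ≤ n → n ≤ N →
      α n * y 0 + q n (x 0) = y (n - 1) ∧ α n * y N + q n (x N) = y n)
    (hf0 : f (x 0) = y 0) (hfN : f (x N) = y N) :
    fifOperator x N α q f (x 0) = y 0 ∧ fifOperator x N α q f (x N) = y N := by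
  have hlt : x (N - 1) < x N := hx.Iic_apply_lt (by omega) le_rfl
  have h01 : x 0 < x 1 := hx.Iic_apply_lt one_pos hN
  constructor
  · rw [fifOperator_eq_fifPiece hx hjoin hf0 hfN le_rfl hN ⟨le_rfl, h01.le⟩]
    exact fifPiece_left (n := 1) hf0 (hjoin 1 le_rfl hN).1
  · rw [fifOperator_eq_fifPiece hx hjoin hf0 hfN hN le_rfl ⟨hlt.le, le_rfl⟩]
    exact fifPiece_right hlt.ne hfN (hjoin N hN le_rfl).2

theorem fifOperator_contraction (hN : 1 ≤ N) (hx : StrictMonoOn x (Iic N)) {c : ℝ}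
    (hc : ∀ n, 1 ≤ n → n ≤ N → |α n| ≤ c) (f g : ℝ → ℝ) :
    ∀ z ∈ Icc (x 0) (x N), ∃ w ∈ Icc (x 0) (x N),
      |fifOperator x N α q f z - fifOperator x N α q g z| ≤ c * |f w - g w| := by
  intro z hz
  obtain ⟨h1, hnN, hmem⟩ := pieceIndex_spec hN hz
  set n := pieceIndex x z
  have hn : x (n - 1) < x n := hx.Iic_apply_lt (by omega) (by omega)
  have h0N : x 0 ≤ x N := (hx.Iic_apply_lt (by omega) le_rfl).le
  refine ⟨_, mapsTo_intervalAffine hn h0N hmem, ?_⟩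
  rw [fifOperator, fifOperator, glue, glue, fifPiece, fifPiece, add_sub_add_right_eq_sub,
    ← mul_sub, abs_mul]
  exact mul_le_mul_of_nonneg_right (hc n h1 hnN) (abs_nonneg _)

theorem SolvesFIFEquation.apply_node (hN : 1 ≤ N) (hx : StrictMonoOn x (Iic N))
    (hα : ∀ n, 1 ≤ n → n ≤ N → |α n| < 1)
    (hjoin : ∀ n, 1 ≤ n → n ≤ N →
      α n * y 0 + q n (x 0) = y (n - 1) ∧ α n * y N + q n (x N) = y n)
    (hψ : SolvesFIFEquation x N α q ψ) {n : ℕ} (hn : n ≤ N) : ψ (x n) = y n := by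
  have h0N : x 0 < x N := hx.Iic_apply_lt (by omega) le_rfl
  -- `ψ (x 0)` and `y 0` are both fixed points of `s ↦ α 1 * s + q 1 (x 0)`; likewise at `x N`
  have h0 : ψ (x 0) = y 0 := by
    have hfe := hψ 1 le_rfl hN (x 0) ⟨le_rfl, h0N.le⟩
    have hy := (hjoin 1 le_rfl hN).1
    simp only [intervalAffine_left, Nat.sub_self] at hfe hy
    have hα1 := (abs_lt.1 (hα 1 le_rfl hN)).2
    nlinarith
  have hNval : ψ (x N) = y N := by
    have hfe := hψ N hN le_rfl (x N) ⟨h0N.le, le_rfl⟩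
    rw [intervalAffine_right h0N.ne] at hfe
    have hy := (hjoin N hN le_rfl).2
    have hαN := (abs_lt.1 (hα N hN le_rfl)).2
    nlinarith
  rcases Nat.eq_zero_or_pos n with rfl | hn1
  · exact h0
  · have hfe := hψ n hn1 hn (x N) ⟨h0N.le, le_rfl⟩
    rw [intervalAffine_right h0N.ne, hNval] at hfe
    rw [hfe, (hjoin n hn1 hn).2]

theorem SolvesFIFEquation.eqOn_fifOperator (hN : 1 ≤ N) (hx : StrictMonoOn x (Iic N))
    (hψ : SolvesFIFEquation x N α q ψ) :
    EqOn ψ (fifOperator x N α q ψ) (Icc (x 0) (x N)) := by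
  intro z hz
  obtain ⟨h1, hnN, hmem⟩ := pieceIndex_spec hN hz
  set n := pieceIndex x z
  have hn : x (n - 1) < x n := hx.Iic_apply_lt (by omega) (by omega)
  have h0N : x 0 < x N := hx.Iic_apply_lt (by omega) le_rfl
  have ht := mapsTo_intervalAffine hn h0N.le hmem
  rw [fifOperator, glue, fifPiece, ← hψ n h1 hnN _ ht,
    intervalAffine_intervalAffine hn.ne h0N.ne]

theorem solvesFIFEquation_of_eqOn_fifOperator (hN : 1 ≤ N) (hx : StrictMonoOn x (Iic N))
    (hjoin : ∀ n, 1 ≤ n → n ≤ N →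
      α n * y 0 + q n (x 0) = y (n - 1) ∧ α n * y N + q n (x N) = y n)
    (hf0 : f (x 0) = y 0) (hfN : f (x N) = y N)
    (hfT : EqOn f (fifOperator x N α q f) (Icc (x 0) (x N))) : SolvesFIFEquation x N α q f := by
  intro n hn hnN t ht
  have hlt : x (n - 1) < x n := hx.Iic_apply_lt (by omega) (by omega)
  have h0N : x 0 < x N := hx.Iic_apply_lt (by omega) le_rfl
  have hmem := mapsTo_intervalAffine h0N hlt.le ht
  have hsub : Icc (x (n - 1)) (x n) ⊆ Icc (x 0) (x N) :=
    Icc_subset_Icc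
      (hx.monotoneOn (mem_Iic.2 (Nat.zero_le N)) (mem_Iic.2 (by omega)) (Nat.zero_le _))
      (hx.monotoneOn (mem_Iic.2 hnN) (mem_Iic.2 le_rfl) hnN)
  rw [hfT (hsub hmem), fifOperator_eq_fifPiece hx hjoin hf0 hfN hn hnN hmem,
    fifPiece_intervalAffine hlt.ne h0N.ne]

end FractalInterpolation

theorem Finset.exists_nnreal_lt_one_forall_abs_le {ι : Type*} (s : Finset ι) {a : ι → ℝ}
    (ha : ∀ i ∈ s, |a i| < 1) : ∃ c : ℝ≥0, c < 1 ∧ ∀ i ∈ s, |a i| ≤ c :=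
  ⟨s.sup fun i ↦ ‖a i‖₊, (Finset.sup_lt_iff one_pos).2 fun i hi ↦ by
      simpa [← NNReal.coe_lt_coe] using ha i hi,
    fun i hi ↦ by simpa using NNReal.coe_le_coe.2 (Finset.le_sup (f := fun i ↦ ‖a i‖₊) hi)⟩

/-- Given a partition `x 0 < x 1 < ⋯ < x N`, affine maps `L n` taking `[x 0, x N]`
onto `[x (n-1), x n]`, scaling factors `|α n| < 1`, continuous maps `q n`, and data
`y n` satisfying the join-up conditions, there is a unique continuous function `φ`
on `[x 0, x N]` with `φ (L n t) = α n * φ t + q n t`; it satisfies `φ (x n) = y n`. -/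
theorem fractal_interpolation_function_existsUnique
    (N : ℕ) (hN : 1 ≤ N) (x : ℕ → ℝ) (hx : ∀ n < N, x n < x (n + 1))
    (L : ℕ → ℝ → ℝ)
    (hL : ∀ n t, L n t = ((x n - x (n - 1)) / (x N - x 0)) * t +
      (x N * x (n - 1) - x 0 * x n) / (x N - x 0))
    (α : ℕ → ℝ) (hα : ∀ n, 1 ≤ n → n ≤ N → |α n| < 1)
    (q : ℕ → ℝ → ℝ) (hq : ∀ n, 1 ≤ n → n ≤ N → ContinuousOn (q n) (Set.Icc (x 0) (x N)))
    (y : ℕ → ℝ)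
    (hjoin : ∀ n, 1 ≤ n → n ≤ N →
      α n * y 0 + q n (x 0) = y (n - 1) ∧ α n * y N + q n (x N) = y n) :
    ∃ φ : ℝ → ℝ,
      ContinuousOn φ (Set.Icc (x 0) (x N)) ∧
      (∀ n, 1 ≤ n → n ≤ N → ∀ t ∈ Set.Icc (x 0) (x N),
        φ (L n t) = α n * φ t + q n t) ∧
      (∀ n ≤ N, φ (x n) = y n) ∧
      (∀ ψ : ℝ → ℝ, ContinuousOn ψ (Set.Icc (x 0) (x N)) →
        (∀ n, 1 ≤ n → n ≤ N → ∀ t ∈ Set.Icc (x 0) (x N),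
          ψ (L n t) = α n * ψ t + q n t) →
        Set.EqOn ψ φ (Set.Icc (x 0) (x N))) := by
  have hmono : StrictMonoOn x (Iic N) := strictMonoOn_Iic_of_lt_succ hx
  have h0N : x 0 < x N := hmono.Iic_apply_lt (by omega) le_rfl
  obtain rfl : L = fun n ↦ intervalAffine (x 0) (x N) (x (n - 1)) (x n) := by
    have := sub_ne_zero.2 h0N.ne'
    ext n t
    rw [hL, intervalAffine]
    field_simp
    ring
  obtain ⟨c, hc, hαc⟩ := (Finset.Icc 1 N).exists_nnreal_lt_one_forall_abs_le (a := α)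
    fun n hn ↦ hα n (Finset.mem_Icc.1 hn).1 (Finset.mem_Icc.1 hn).2
  have hT := fifOperator_contraction (q := q) hN hmono
    fun n h1 h2 ↦ hαc n (Finset.mem_Icc.2 ⟨h1, h2⟩)
  obtain ⟨φ, hφc, hφ0, hφN, hφT⟩ := exists_eqOn_of_forall_exists_abs_sub_le h0N hc
    (fun f hf hf0 hfN ↦ ⟨continuousOn_fifOperator hN hmono hq hjoin hf hf0 hfN,
      fifOperator_endpoints hN hmono hjoin hf0 hfN⟩) hT
  have hφ := solvesFIFEquation_of_eqOn_fifOperator hN hmono hjoin hφ0 hφN hφT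
  refine ⟨φ, hφc, hφ, fun n hn ↦ hφ.apply_node hN hmono hα hjoin hn, fun ψ hψc hψ ↦ ?_⟩
  exact eqOn_of_forall_exists_abs_sub_le isCompact_Icc hc hT hψc hφc
    (SolvesFIFEquation.eqOn_fifOperator hN hmono hψ) hφT
end

section
/- Fix integers p ≥ 1 and N ≥ 1, a partition x_0 < x_1 < ⋯ < x_N, and data y_{n,2k} ∈ ℝ (0 ≤ n ≤ N, 0 ≤ k ≤ p). Let ℓ_0 : [x_0,x_N] → ℝ be the unique continuous function satisfying ℓ_0(L_n(x)) = q_n(0, x) for all x ∈ [x_0,x_N] and 1 ≤ n ≤ N (i.e. the Lidstone FIF with scaling vector α = 0). Then for each 1 ≤ n ≤ N and each x ∈ [x_{n−1},x_n], ℓ_0(x) = Σ_{l=0}^{p} [ y_{n−1,2l} Λ_l((x_n − x)/(x_n − x_{n−1})) + y_{n,2l} Λ_l((x − x_{n−1})/(x_n − x_{n−1})) ] (x_n − x_{n−1})^{2l}. -/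
section LidAuxSection

open Polynomial Finset

namespace LidAux

lemma iter_two (P : Polynomial ℝ) : derivative^[2] P = derivative (derivative P) := rfl

lemma iter_deriv_eval (Q : Polynomial ℝ) (m : ℕ) :
    iteratedDeriv m (fun t => Q.eval t) = fun t => (derivative^[m] Q).eval t := by
  induction m with
  | zero => simp
  | succ k ih =>
    rw [iteratedDeriv_succ, ih]
    funext t
    rw [Function.iterate_succ_apply']
    exact Polynomial.deriv (p := derivative^[k] Q)

lemma natDeg_deriv_eq (P : Polynomial ℝ) (h : 0 < P.natDegree) :
    (derivative P).natDegree = P.natDegree - 1 :=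
  natDegree_eq_of_degree_eq_some (degree_derivative_eq P h)

lemma natDeg_le_of_dd {P : Polynomial ℝ} {d : ℕ}
    (h : (derivative (derivative P)).natDegree ≤ d) : P.natDegree ≤ d + 2 := by
  by_contra hc
  push_neg at hc
  have h1 : (derivative P).natDegree = P.natDegree - 1 := natDeg_deriv_eq P (by omega)
  have h2 : (derivative (derivative P)).natDegree = (derivative P).natDegree - 1 :=
    natDeg_deriv_eq _ (by omega)
  omega

lemma linear_zero {P : Polynomial ℝ} (h1 : P.natDegree ≤ 1) {x0 xN : ℝ} (hne : x0 ≠ xN)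
    (h0 : P.eval x0 = 0) (hNv : P.eval xN = 0) : P = 0 := by
  obtain ⟨a, b, rfl⟩ := exists_eq_X_add_C_of_natDegree_le_one h1
  simp only [eval_add, eval_mul, eval_C, eval_X] at h0 hNv
  have ha : a = 0 := by
    rcases mul_eq_zero.1 (show a * (x0 - xN) = 0 by ring_nf; linarith) with h | h
    · exact h
    · exact absurd (sub_eq_zero.1 h) hne
  have hb : b = 0 := by rw [ha] at h0; linarith
  rw [ha, hb]; simp

lemma lid_unique (x0 xN : ℝ) (hne : x0 ≠ xN) :
    ∀ p (P : Polynomial ℝ), P.natDegree ≤ 2 * p + 1 →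
    (∀ l ≤ p, (derivative^[2*l] P).eval x0 = 0 ∧ (derivative^[2*l] P).eval xN = 0) →
    P = 0 := by
  intro p
  induction p with
  | zero =>
    intro P hdeg hcond
    have h := hcond 0 le_rfl
    simp only [Nat.mul_zero, Function.iterate_zero_apply] at h
    exact linear_zero hdeg hne h.1 h.2
  | succ k ih =>
    intro P hdeg hcond
    have hQ0 : derivative^[2] P = 0 := by
      apply ih
      · have h1 := natDegree_iterate_derivative P 2
        omega
      · intro l hl
        have h := hcond (l + 1) (by omega)
        have he : derivative^[2*(l+1)] P = derivative^[2*l] (derivative^[2] P) := by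
          rw [show 2*(l+1) = 2*l + 2 by ring, Function.iterate_add_apply]
        rw [he] at h
        exact h
    have hd1 : (derivative P).natDegree = 0 :=
      natDegree_eq_zero_of_derivative_eq_zero (by rw [← iter_two, hQ0])
    have hdeg1 : P.natDegree ≤ 1 := by
      by_contra hc
      push_neg at hc
      have e1 : (derivative P).natDegree = P.natDegree - 1 := natDeg_deriv_eq P (by omega)
      omega
    have h := hcond 0 (by omega)
    simp only [Nat.mul_zero, Function.iterate_zero_apply] at h
    exact linear_zero hdeg1 hne h.1 h.2

lemma deriv_comp_affine (Q : Polynomial ℝ) (a b : ℝ) :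
    derivative (Q.comp (C a * X + C b)) = C a * (derivative Q).comp (C a * X + C b) := by
  rw [derivative_comp]
  simp only [derivative_add, derivative_C, derivative_C_mul, derivative_X, mul_one, add_zero]

lemma dd_comp_affine (Q : Polynomial ℝ) (a b : ℝ) :
    derivative^[2] (Q.comp (C a * X + C b)) =
      C (a * a) * (derivative^[2] Q).comp (C a * X + C b) := by
  rw [iter_two, iter_two, deriv_comp_affine, derivative_C_mul, deriv_comp_affine,
    ← mul_assoc, ← C_mul]

lemma iter_deriv_sum (s : Finset ℕ) (f : ℕ → Polynomial ℝ) (m : ℕ) :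
    derivative^[m] (∑ i ∈ s, f i) = ∑ i ∈ s, derivative^[m] (f i) := by
  induction m with
  | zero => simp
  | succ k ih =>
    rw [Function.iterate_succ_apply', ih, derivative_sum]
    exact Finset.sum_congr rfl fun i _ => (Function.iterate_succ_apply' _ _ _).symm

lemma iter_deriv_add (f g : Polynomial ℝ) (m : ℕ) :
    derivative^[m] (f + g) = derivative^[m] f + derivative^[m] g := by
  induction m with
  | zero => simp
  | succ k ih =>
    rw [Function.iterate_succ_apply', ih, derivative_add,
      ← Function.iterate_succ_apply' derivative k f,
      ← Function.iterate_succ_apply' derivative k g]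

lemma iter_deriv_sub (f g : Polynomial ℝ) (m : ℕ) :
    derivative^[m] (f - g) = derivative^[m] f - derivative^[m] g := by
  induction m with
  | zero => simp
  | succ k ih =>
    rw [Function.iterate_succ_apply', ih, derivative_sub,
      ← Function.iterate_succ_apply' derivative k f,
      ← Function.iterate_succ_apply' derivative k g]

lemma iter_family (P : ℕ → Polynomial ℝ) (hP0 : P 0 = X)
    (hP : ∀ l, derivative^[2] (P (l + 1)) = P l) (a b : ℝ) :
    ∀ k l, derivative^[2*k] ((P l).comp (C a * X + C b)) =
      if k ≤ l then C ((a * a) ^ k) * (P (l - k)).comp (C a * X + C b) else 0 := by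
  intro k
  induction k with
  | zero => intro l; simp
  | succ k ih =>
    intro l
    rw [show 2*(k+1) = 2 + 2*k by ring, Function.iterate_add_apply, ih l]
    by_cases hkl : k ≤ l
    · rw [if_pos hkl]
      rcases Nat.lt_or_ge k l with hlt | hge
      · rw [if_pos (by omega : k + 1 ≤ l)]
        rw [iterate_derivative_C_mul, dd_comp_affine,
          show l - k = (l - (k+1)) + 1 by omega, hP]
        symm
        rw [pow_succ, C_mul, mul_assoc]
      · have hk : l - k = 0 := by omega
        rw [if_neg (by omega), hk, hP0, iterate_derivative_C_mul]
        rw [X_comp, iter_two]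
        simp
    · rw [if_neg hkl, if_neg (by omega)]
      simp

lemma Sval1 (P : ℕ → Polynomial ℝ) (hP0 : P 0 = X)
    (hPdd : ∀ l, derivative^[2] (P (l + 1)) = P l)
    (hPval1 : ∀ m, (P (m + 1)).eval 1 = 0)
    (p k : ℕ) (hk : k ≤ p) (a d : ℝ) (e : ℕ → ℝ) (z : ℝ) (h : a * z + d = 1) :
    (derivative^[2*k] (∑ l ∈ Finset.range (p+1),
      C (e l) * (P l).comp (C a * X + C d))).eval z = e k * (a * a) ^ k := by
  rw [iter_deriv_sum, eval_finset_sum]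
  rw [Finset.sum_eq_single_of_mem k (Finset.mem_range.2 (by omega))]
  · rw [iterate_derivative_C_mul, iter_family P hP0 hPdd, if_pos le_rfl, Nat.sub_self, hP0]
    simp [eval_comp, h]
  · intro l hl hlk
    rw [iterate_derivative_C_mul, iter_family P hP0 hPdd]
    by_cases hkl : k ≤ l
    · rw [if_pos hkl, show l - k = (l - k - 1) + 1 by omega]
      simp [eval_comp, h, hPval1]
    · rw [if_neg hkl]
      simp

lemma Sval0 (P : ℕ → Polynomial ℝ) (hP0 : P 0 = X)
    (hPdd : ∀ l, derivative^[2] (P (l + 1)) = P l)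
    (hPval0 : ∀ l, (P l).eval 0 = 0)
    (p k : ℕ) (a d : ℝ) (e : ℕ → ℝ) (z : ℝ) (h : a * z + d = 0) :
    (derivative^[2*k] (∑ l ∈ Finset.range (p+1),
      C (e l) * (P l).comp (C a * X + C d))).eval z = 0 := by
  rw [iter_deriv_sum, eval_finset_sum]
  apply Finset.sum_eq_zero
  intro l hl
  rw [iterate_derivative_C_mul, iter_family P hP0 hPdd]
  by_cases hkl : k ≤ l
  · rw [if_pos hkl]
    simp [eval_comp, h, hPval0]
  · rw [if_neg hkl]
    simp

end LidAux

end LidAuxSection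

/-- The Lidstone FIF `ℓ₀` with zero scaling vector coincides on each subinterval
`[x (n-1), x n]` with the classical two-point Lidstone interpolation formula. -/

theorem lidstone_FIF_zero_scaling (Λ : ℕ → ℝ → ℝ) (hΛ : LidstoneProp Λ)
    (p N : ℕ) (hp : 1 ≤ p) (hN : 1 ≤ N)
    (x : ℕ → ℝ) (hx : ∀ n < N, x n < x (n + 1))
    (y : ℕ → ℕ → ℝ)
    (L : ℕ → ℝ → ℝ)
    (hL : ∀ n t, L n t = ((x n - x (n - 1)) / (x N - x 0)) * t +
      (x N * x (n - 1) - x 0 * x n) / (x N - x 0))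
    (q : ℕ → ℝ → ℝ)
    (hq : ∀ n, 1 ≤ n → n ≤ N →
      (∃ P : Polynomial ℝ, P.natDegree ≤ 2 * p + 1 ∧ ∀ t, q n t = P.eval t) ∧
      ∀ l ≤ p,
        iteratedDeriv (2 * l) (q n) (x 0) =
          ((x n - x (n - 1)) / (x N - x 0)) ^ (2 * l) * y (n - 1) l ∧
        iteratedDeriv (2 * l) (q n) (x N) =
          ((x n - x (n - 1)) / (x N - x 0)) ^ (2 * l) * y n l)
    (ℓ₀ : ℝ → ℝ)
    (hℓcont : ContinuousOn ℓ₀ (Set.Icc (x 0) (x N)))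
    (hℓ : ∀ n, 1 ≤ n → n ≤ N → ∀ t ∈ Set.Icc (x 0) (x N), ℓ₀ (L n t) = q n t) :
    ∀ n, 1 ≤ n → n ≤ N → ∀ t ∈ Set.Icc (x (n - 1)) (x n),
      ℓ₀ t = ∑ l ∈ Finset.range (p + 1),
        (y (n - 1) l * Λ l ((x n - t) / (x n - x (n - 1))) +
          y n l * Λ l ((t - x (n - 1)) / (x n - x (n - 1)))) *
          (x n - x (n - 1)) ^ (2 * l) := by
  obtain ⟨hpoly, hΛ0, hΛrec⟩ := hΛ
  choose P hPe using hpoly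
  have hPfun : ∀ l, Λ l = fun t => (P l).eval t := fun l => funext (hPe l)
  have hP0 : P 0 = Polynomial.X := Polynomial.funext fun r => by
    rw [← hPe, hΛ0, Polynomial.eval_X]
  have hPdd : ∀ l, Polynomial.derivative^[2] (P (l + 1)) = P l := by
    intro l
    apply Polynomial.funext
    intro r
    have h1 := (hΛrec l).1 r
    rw [hPfun (l + 1), hPfun l, LidAux.iter_deriv_eval] at h1
    exact h1
  have hPdeg : ∀ l, (P l).natDegree ≤ 2 * l + 1 := by
    intro l
    induction l with
    | zero => rw [hP0]; simp [Polynomial.natDegree_X]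
    | succ k ih =>
      have hdd : (Polynomial.derivative (Polynomial.derivative (P (k + 1)))).natDegree
          ≤ 2 * k + 1 := by
        rw [← LidAux.iter_two, hPdd]; exact ih
      have := LidAux.natDeg_le_of_dd hdd
      omega
  have hPval0 : ∀ l, (P l).eval 0 = 0 := by
    intro l
    cases l with
    | zero => rw [hP0]; simp
    | succ m => rw [← hPe]; exact (hΛrec m).2.1
  have hPval1 : ∀ m, (P (m + 1)).eval 1 = 0 := fun m => by rw [← hPe]; exact (hΛrec m).2.2
  have hxm : ∀ j, j ≤ N → ∀ i, i < j → x i < x j := by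
    intro j
    induction j with
    | zero => intro _ i hi; omega
    | succ k ih =>
      intro hk i hi
      have h1 : x k < x (k + 1) := hx k (by omega)
      rcases Nat.lt_or_ge i k with h | h
      · exact lt_trans (ih (by omega) i h) h1
      · have hik : i = k := by omega
        rw [hik]; exact h1
  intro n hn1 hnN t ht
  have hx0N : x 0 < x N := hxm N le_rfl 0 (by omega)
  have hxn : x (n - 1) < x n := hxm n hnN (n - 1) (by omega)
  have hD : x N - x 0 ≠ 0 := ne_of_gt (by linarith)
  have hdn : (0:ℝ) < x n - x (n - 1) := by linarith
  have hdn' : x n - x (n - 1) ≠ 0 := ne_of_gt hdn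
  obtain ⟨⟨Q, hQdeg, hQe⟩, hqd⟩ := hq n hn1 hnN
  set c : ℝ := 1 / (x N - x 0) with hc
  set e : ℕ → ℝ := fun l => (x n - x (n - 1)) ^ (2 * l) * y (n - 1) l with he
  set f : ℕ → ℝ := fun l => (x n - x (n - 1)) ^ (2 * l) * y n l with hf
  set S1 : Polynomial ℝ := ∑ l ∈ Finset.range (p + 1),
      Polynomial.C (e l) * (P l).comp (Polynomial.C (-c) * Polynomial.X
        + Polynomial.C (x N * c)) with hS1
  set S2 : Polynomial ℝ := ∑ l ∈ Finset.range (p + 1),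
      Polynomial.C (f l) * (P l).comp (Polynomial.C c * Polynomial.X
        + Polynomial.C (-(x 0) * c)) with hS2
  -- argument identities at the endpoints
  have ha10 : -c * x 0 + x N * c = 1 := by rw [hc]; field_simp; ring
  have ha20 : c * x 0 + -(x 0) * c = 0 := by ring
  have ha1N : -c * x N + x N * c = 0 := by ring
  have ha2N : c * x N + -(x 0) * c = 1 := by rw [hc]; field_simp; ring
  -- coefficient identity
  have hcoef : ∀ (k : ℕ) (w : ℝ), (x n - x (n - 1)) ^ (2 * k) * w * (c * c) ^ k
      = ((x n - x (n - 1)) / (x N - x 0)) ^ (2 * k) * w := by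
    intro k w
    have hpow : ((x N - x 0):ℝ) ^ (2 * k) ≠ 0 := pow_ne_zero _ hD
    have hcc : (c * c) ^ k = ((x N - x 0) ^ (2 * k))⁻¹ := by
      rw [hc, one_div, ← mul_inv, inv_pow, ← sq, ← pow_mul]
    rw [hcc, div_pow]
    field_simp
  -- derivative values of G = S1 + S2
  have hqiter : ∀ m : ℕ, iteratedDeriv m (q n)
      = fun z => (Polynomial.derivative^[m] Q).eval z := by
    intro m
    have hq' : q n = fun t => Q.eval t := funext hQe
    rw [hq', LidAux.iter_deriv_eval]
  -- Q = S1 + S2 by uniqueness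
  have hQG : Q = S1 + S2 := by
    have hsub : Q - (S1 + S2) = 0 := by
      apply LidAux.lid_unique (x 0) (x N) (ne_of_lt hx0N) p
      · have hdeg12 : ∀ (a b : ℝ) (el : ℕ → ℝ),
            (∑ l ∈ Finset.range (p + 1), Polynomial.C (el l) *
              (P l).comp (Polynomial.C a * Polynomial.X + Polynomial.C b)).natDegree
              ≤ 2 * p + 1 := by
          intro a b el
          apply Polynomial.natDegree_sum_le_of_forall_le
          intro l hl
          have hl' : l ≤ p := Nat.lt_succ_iff.1 (Finset.mem_range.1 hl)
          refine le_trans (Polynomial.natDegree_C_mul_le _ _) ?_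
          refine le_trans Polynomial.natDegree_comp_le ?_
          have h3 := hPdeg l
          calc (P l).natDegree * (Polynomial.C a * Polynomial.X + Polynomial.C b).natDegree
              ≤ (2 * l + 1) * 1 := Nat.mul_le_mul h3 Polynomial.natDegree_linear_le
            _ ≤ 2 * p + 1 := by omega
        apply le_trans (Polynomial.natDegree_sub_le _ _)
        apply max_le hQdeg
        apply le_trans (Polynomial.natDegree_add_le _ _)
        apply max_le
        · rw [hS1]; exact hdeg12 _ _ _
        · rw [hS2]; exact hdeg12 _ _ _
      · intro l hl
        have hql := hqd l hl
        rw [hqiter] at hql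
        simp only at hql
        have hs1x0 := LidAux.Sval1 P hP0 hPdd hPval1 p l hl (-c) (x N * c) e (x 0) ha10
        have hs2x0 := LidAux.Sval0 P hP0 hPdd hPval0 p l c (-(x 0) * c) f (x 0) ha20
        have hs1xN := LidAux.Sval0 P hP0 hPdd hPval0 p l (-c) (x N * c) e (x N) ha1N
        have hs2xN := LidAux.Sval1 P hP0 hPdd hPval1 p l hl c (-(x 0) * c) f (x N) ha2N
        rw [show ((-c) * (-c)) = c * c by ring] at hs1x0
        constructor
        · rw [LidAux.iter_deriv_sub, Polynomial.eval_sub, LidAux.iter_deriv_add,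
            Polynomial.eval_add, hql.1, hS1, hS2, hs1x0, hs2x0]
          simp only [he]
          rw [← hcoef l (y (n - 1) l)]
          ring
        · rw [LidAux.iter_deriv_sub, Polynomial.eval_sub, LidAux.iter_deriv_add,
            Polynomial.eval_add, hql.2, hS1, hS2, hs1xN, hs2xN]
          simp only [hf]
          rw [← hcoef l (y n l)]
          ring
    have := sub_eq_zero.1 hsub
    exact this
  -- the preimage point s
  set s : ℝ := (x N * (t - x (n - 1)) + x 0 * (x n - t)) / (x n - x (n - 1)) with hs
  have hs0 : x 0 ≤ s := by
    rw [hs, le_div_iff₀ hdn]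
    nlinarith [mul_nonneg (le_of_lt (sub_pos.2 hx0N)) (sub_nonneg.2 ht.1)]
  have hsN : s ≤ x N := by
    rw [hs, div_le_iff₀ hdn]
    nlinarith [mul_nonneg (le_of_lt (sub_pos.2 hx0N)) (sub_nonneg.2 ht.2)]
  have hLs : L n s = t := by
    rw [hL n s, hs]
    field_simp
    ring
  have harg1 : -c * s + x N * c = (x n - t) / (x n - x (n - 1)) := by
    rw [hc, hs]
    field_simp
    ring
  have harg2 : c * s + -(x 0) * c = (t - x (n - 1)) / (x n - x (n - 1)) := by
    rw [hc, hs]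
    field_simp
    ring
  have hval : ℓ₀ t = Q.eval s := by
    rw [← hLs, hℓ n hn1 hnN s ⟨hs0, hsN⟩, hQe]
  rw [hval, hQG, Polynomial.eval_add, hS1, hS2,
    Polynomial.eval_finset_sum, Polynomial.eval_finset_sum, ← Finset.sum_add_distrib]
  apply Finset.sum_congr rfl
  intro l hl
  simp only [Polynomial.eval_mul, Polynomial.eval_C, Polynomial.eval_comp,
    Polynomial.eval_add, Polynomial.eval_X, harg1, harg2]
  rw [hPe l ((x n - t) / (x n - x (n - 1))), hPe l ((t - x (n - 1)) / (x n - x (n - 1))),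
    he, hf]
  ring
end

section
/- Fix integers p ≥ 1 and N ≥ 1, a partition x_0 < x_1 < ⋯ < x_N, and data y_{n,2k} ∈ ℝ (0 ≤ n ≤ N, 0 ≤ k ≤ p). Then for every 1 ≤ n ≤ N, every 0 ≤ k ≤ p, all real scaling parameters α', α'' and every x ∈ [x_0,x_N], | (q_n(α',·) − q_n(α'',·))^{(2k)}(x) | ≤ |α' − α''| · (2ρπ/3) · Σ_{l=0}^{p−k} ((x_N − x_0)/π)^{2l}. -/
/-!
The difference of the two interpolants is a polynomial of degree at most `2p+1` whose even
derivatives at the endpoints are `(α'' - α') y_{0,2l}` and `(α'' - α') y_{N,2l}`, so it suffices to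
bound a polynomial `Q` of degree at most `2m+1` whose even derivatives at `a` and `b` are bounded
by `M`. By induction on `m`, `|Q t| ≤ M (1 + c_m sin (π (t - a) / (b - a)))` with
`c_{m+1} = ((b - a) / π)² (2π/3 + c_m)`: given this bound for `Q''`, compare `Q` with
`M (1 + (t - a)(b - t)/2 + c_m ((b - a) / π)² sin (π (t - a) / (b - a)))`, whose second derivative
is `-M (1 + c_m sin (π (t - a) / (b - a)))`, and absorb the parabola into the sine arch using
`3π s (1 - s) ≤ 4 sin (π s)` on `[0, 1]`. Unrolling the recursion gives the geometric sum.
-/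

open Polynomial Set Real

lemma three_pi_mul_mul_one_sub_le_four_sin {s : ℝ} (hs0 : 0 ≤ s) (hs1 : s ≤ 1) :
    3 * π * (s * (1 - s)) ≤ 4 * sin (π * s) := by
  -- on `[0, 1/2]` the cubic Taylor bound `x - x³/6 < sin x` suffices
  have half : ∀ s : ℝ, 0 ≤ s → s ≤ 1 / 2 → 3 * π * (s * (1 - s)) ≤ 4 * sin (π * s) := by
    intro s hs0 hs
    rcases hs0.eq_or_lt with rfl | hs0
    · simp
    have hπs : 0 < π * s := by positivity
    have hcube := sin_gt_sub_cube hπs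
    have hπ2 : π ^ 2 < 10 := by nlinarith [pi_lt_d2, pi_pos]
    have hquad : 2 * π ^ 2 * s ^ 2 ≤ 3 + 9 * s := by nlinarith
    nlinarith [mul_le_mul_of_nonneg_left hquad hπs.le]
  rcases le_total s (1 / 2) with hs | hs
  · exact half s hs0 hs
  · have h := half (1 - s) (by linarith) (by linarith)
    rwa [sub_sub_cancel, mul_comm (1 - s), mul_one_sub π s, sin_pi_sub] at h

theorem le_on_Icc_of_hasDerivAt2 {a b : ℝ} {f f' f'' g g' g'' : ℝ → ℝ}
    (hf : ∀ u, HasDerivAt f (f' u) u) (hf' : ∀ u, HasDerivAt f' (f'' u) u)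
    (hg : ∀ u, HasDerivAt g (g' u) u) (hg' : ∀ u, HasDerivAt g' (g'' u) u)
    (ha : f a ≤ g a) (hb : f b ≤ g b) (h2 : ∀ u ∈ Ioo a b, g'' u ≤ f'' u) :
    ∀ t ∈ Icc a b, f t ≤ g t := by
  intro t ht
  have hconc : ConcaveOn ℝ (Icc a b) (fun u => g u - f u) := by
    refine concaveOn_of_hasDerivWithinAt2_nonpos (convex_Icc a b)
      (fun u _ => ((hg u).sub (hf u)).continuousAt.continuousWithinAt) (f' := fun u => g' u - f' u)
      (f'' := fun u => g'' u - f'' u) (fun u _ => ((hg u).sub (hf u)).hasDerivWithinAt)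
      (fun u _ => ((hg' u).sub (hf' u)).hasDerivWithinAt) fun u hu => ?_
    rw [interior_Icc] at hu
    linarith [h2 u hu]
  have hab : a ≤ b := ht.1.trans ht.2
  have := hconc.ge_on_segment (left_mem_Icc.2 hab) (right_mem_Icc.2 hab)
    (by rwa [segment_eq_Icc hab])
  linarith [(le_min (sub_nonneg.2 ha) (sub_nonneg.2 hb)).trans this]

theorem abs_le_on_Icc_of_hasDerivAt2 {a b : ℝ} {f f' f'' g g' g'' : ℝ → ℝ}
    (hf : ∀ u, HasDerivAt f (f' u) u) (hf' : ∀ u, HasDerivAt f' (f'' u) u)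
    (hg : ∀ u, HasDerivAt g (g' u) u) (hg' : ∀ u, HasDerivAt g' (g'' u) u)
    (ha : |f a| ≤ g a) (hb : |f b| ≤ g b) (h2 : ∀ u ∈ Ioo a b, |f'' u| ≤ -g'' u) :
    ∀ t ∈ Icc a b, |f t| ≤ g t := by
  intro t ht
  have hle := le_on_Icc_of_hasDerivAt2 hf hf' hg hg' (le_abs_self _ |>.trans ha)
    (le_abs_self _ |>.trans hb) (fun u hu => by linarith [neg_abs_le (f'' u), h2 u hu]) t ht
  have hge : -f t ≤ g t := le_on_Icc_of_hasDerivAt2 (fun u => (hf u).neg) (fun u => (hf' u).neg)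
    hg hg' (neg_le_abs _ |>.trans ha) (neg_le_abs _ |>.trans hb)
    (fun u hu => by linarith [le_abs_self (f'' u), h2 u hu]) t ht
  exact abs_le.2 ⟨by linarith, hle⟩

noncomputable def sineArch (a b u : ℝ) : ℝ := sin (π * (u - a) / (b - a))

section sineArch

variable {a b : ℝ}

@[simp] lemma sineArch_left : sineArch a b a = 0 := by simp [sineArch]

lemma sineArch_right (hab : a < b) : sineArch a b b = 0 := by
  simp [sineArch, mul_div_assoc, div_self (sub_pos.2 hab).ne']

lemma sineArch_le_one (t : ℝ) : sineArch a b t ≤ 1 := sin_le_one _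

lemma hasDerivAt_sineArch_arg (u : ℝ) :
    HasDerivAt (fun v => π * (v - a) / (b - a)) (π / (b - a)) u := by
  simpa using (((hasDerivAt_id' u).sub_const a).const_mul π).div_const (b - a)

lemma hasDerivAt_sineArch (u : ℝ) :
    HasDerivAt (sineArch a b) (π / (b - a) * cos (π * (u - a) / (b - a))) u :=
  (hasDerivAt_sineArch_arg u).sin.congr_deriv (mul_comm _ _)

lemma hasDerivAt_deriv_sineArch (u : ℝ) :
    HasDerivAt (fun v => π / (b - a) * cos (π * (v - a) / (b - a)))
      (-(π / (b - a)) ^ 2 * sineArch a b u) u := by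
  refine ((hasDerivAt_sineArch_arg u).cos.const_mul (π / (b - a))).congr_deriv ?_
  simp only [sineArch]
  ring

lemma mul_sub_le_sineArch (hab : a < b) {t : ℝ} (ht : t ∈ Icc a b) :
    3 * π * ((t - a) * (b - t)) ≤ 4 * (b - a) ^ 2 * sineArch a b t := by
  have hL := sub_pos.2 hab
  have hs := three_pi_mul_mul_one_sub_le_four_sin (s := (t - a) / (b - a))
    (div_nonneg (by linarith [ht.1]) hL.le) ((div_le_one hL).2 (by linarith [ht.2]))
  have e : (t - a) / (b - a) * (1 - (t - a) / (b - a)) = (t - a) * (b - t) / (b - a) ^ 2 := by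
    field_simp; ring
  rw [e, ← mul_div_assoc, div_le_iff₀ (by positivity), ← mul_div_assoc] at hs
  rw [sineArch]
  linarith

end sineArch

theorem abs_le_sineArch_bound_of_abs_deriv2_le {a b M c : ℝ} (hab : a < b) {f f' f'' : ℝ → ℝ}
    (hf : ∀ u, HasDerivAt f (f' u) u) (hf' : ∀ u, HasDerivAt f' (f'' u) u)
    (ha : |f a| ≤ M) (hb : |f b| ≤ M)
    (h2 : ∀ u ∈ Ioo a b, |f'' u| ≤ M * (1 + c * sineArch a b u)) {t : ℝ} (ht : t ∈ Icc a b) :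
    |f t| ≤ M * (1 + ((b - a) / π) ^ 2 * (2 * π / 3 + c) * sineArch a b t) := by
  set r := ((b - a) / π) ^ 2
  have hr : r * (π / (b - a)) ^ 2 = 1 := by
    have := (sub_pos.2 hab).ne'
    simp only [r]
    field_simp
  -- Comparison function: the parabola dominates the `M` part of `f''`, the arch the rest.
  have hg (u : ℝ) : HasDerivAt (fun u => M * (1 + (u - a) * (b - u) / 2 + c * r * sineArch a b u))
      (M * ((a + b - 2 * u) / 2 + c * r * (π / (b - a) * cos (π * (u - a) / (b - a))))) u := by
    have hpar : HasDerivAt (fun u => (u - a) * (b - u) / 2) ((a + b - 2 * u) / 2) u := by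
      refine ((((hasDerivAt_id' u).sub_const a).mul
        ((hasDerivAt_id' u).const_sub b)).div_const 2).congr_deriv ?_
      ring
    refine (((hasDerivAt_const u 1).add hpar).add
      ((hasDerivAt_sineArch u).const_mul (c * r))).const_mul M |>.congr_deriv ?_
    ring
  have hg' (u : ℝ) : HasDerivAt
      (fun u => M * ((a + b - 2 * u) / 2 + c * r * (π / (b - a) * cos (π * (u - a) / (b - a)))))
      (-(M * (1 + c * sineArch a b u))) u := by
    have hlin : HasDerivAt (fun u : ℝ => (a + b - 2 * u) / 2) (-1) u := by
      refine (((hasDerivAt_const u (a + b)).sub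
        ((hasDerivAt_id' u).const_mul 2)).div_const 2).congr_deriv ?_
      ring
    refine ((hlin.add ((hasDerivAt_deriv_sineArch u).const_mul (c * r))).const_mul M).congr_deriv ?_
    linear_combination (-(M * c * sineArch a b u)) * hr
  have hM : 0 ≤ M := (abs_nonneg _).trans ha
  have hpar : (t - a) * (b - t) / 2 ≤ r * (2 * π / 3) * sineArch a b t := by
    have : r * (2 * π / 3) = 4 * (b - a) ^ 2 / (3 * π) / 2 := by
      simp only [r]; field_simp; ring
    rw [this, div_div, div_mul_eq_mul_div, le_div_iff₀ (by positivity)]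
    nlinarith [mul_sub_le_sineArch hab ht]
  calc |f t| ≤ M * (1 + (t - a) * (b - t) / 2 + c * r * sineArch a b t) :=
        abs_le_on_Icc_of_hasDerivAt2 hf hf' hg hg' (by simpa using ha)
          (by simpa [sineArch_right hab] using hb) (fun u hu => by simpa using h2 u hu) t ht
    _ ≤ M * (1 + r * (2 * π / 3 + c) * sineArch a b t) := by
        apply mul_le_mul_of_nonneg_left _ hM
        linarith

lemma iteratedDeriv_eval_eq_eval_iterate_derivative (P : ℝ[X]) (n : ℕ) :
    iteratedDeriv n (fun s => P.eval s) = fun s => (derivative^[n] P).eval s := by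
  induction n generalizing P with
  | zero => simp
  | succ n ih =>
    rw [iteratedDeriv_succ', funext fun s => P.deriv (x := s), ih, Function.iterate_succ_apply]

theorem abs_eval_le_sineArch_bound {a b M : ℝ} (hab : a < b) (m : ℕ) (Q : ℝ[X])
    (hQ : Q.natDegree ≤ 2 * m + 1)
    (hQab : ∀ j ≤ m, |(derivative^[2 * j] Q).eval a| ≤ M ∧ |(derivative^[2 * j] Q).eval b| ≤ M)
    {t : ℝ} (ht : t ∈ Icc a b) :
    |Q.eval t| ≤ M * (1 + 2 * π / 3 *
      (((b - a) / π) ^ 2 * ∑ i ∈ Finset.range m, (((b - a) / π) ^ 2) ^ i) * sineArch a b t) := by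
  induction m generalizing Q t with
  | zero =>
    have hQ'' : derivative (derivative Q) = 0 := iterate_derivative_eq_zero (x := 2) (by omega)
    simpa using abs_le_on_Icc_of_hasDerivAt2 (fun u => Q.hasDerivAt u)
      (fun u => (derivative Q).hasDerivAt u) (fun u => hasDerivAt_const u M)
      (fun u => hasDerivAt_const u 0) (by simpa using (hQab 0 le_rfl).1)
      (by simpa using (hQab 0 le_rfl).2) (fun u _ => by simp [hQ'']) t ht
  | succ m ih =>
    have hQ'' : (derivative^[2] Q).natDegree ≤ 2 * m + 1 :=
      (natDegree_iterate_derivative Q 2).trans (by omega)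
    have hQab'' (j : ℕ) (hj : j ≤ m) :
        |(derivative^[2 * j] (derivative^[2] Q)).eval a| ≤ M ∧
          |(derivative^[2 * j] (derivative^[2] Q)).eval b| ≤ M := by
      rw [← Function.iterate_add_apply]
      exact hQab (j + 1) (by omega)
    refine (abs_le_sineArch_bound_of_abs_deriv2_le hab (fun u => Q.hasDerivAt u)
      (fun u => (derivative Q).hasDerivAt u) (by simpa using (hQab 0 (by omega)).1)
      (by simpa using (hQab 0 (by omega)).2) (fun u hu => ih _ hQ'' hQab'' (Ioo_subset_Icc_self hu))
      ht).trans_eq ?_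
    rw [geom_sum_succ]
    ring

theorem abs_eval_le_geom_sum {a b M t : ℝ} (m : ℕ) (Q : ℝ[X]) (hQ : Q.natDegree ≤ 2 * m + 1)
    (hQab : ∀ j ≤ m, |(derivative^[2 * j] Q).eval a| ≤ M ∧ |(derivative^[2 * j] Q).eval b| ≤ M)
    (ht : t ∈ Icc a b) :
    |Q.eval t| ≤ M * (2 * π / 3) * ∑ l ∈ Finset.range (m + 1), ((b - a) / π) ^ (2 * l) := by
  set S := ((b - a) / π) ^ 2 * ∑ i ∈ Finset.range m, (((b - a) / π) ^ 2) ^ i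
  have hbound : |Q.eval t| ≤ M * (1 + 2 * π / 3 * S * sineArch a b t) := by
    rcases (ht.1.trans ht.2).eq_or_lt with rfl | hab
    · obtain rfl : t = a := by simpa using ht
      simpa using (hQab 0 m.zero_le).1
    · exact abs_eval_le_sineArch_bound hab m Q hQ hQab ht
  have hM : 0 ≤ M := (abs_nonneg _).trans (hQab 0 m.zero_le).1
  have hS : 0 ≤ S := by positivity
  have hsum : ∑ l ∈ Finset.range (m + 1), ((b - a) / π) ^ (2 * l) = S + 1 := by
    simp only [pow_mul, S]
    exact geom_sum_succ
  rw [hsum, mul_assoc]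
  refine hbound.trans (mul_le_mul_of_nonneg_left ?_ hM)
  have hw : 2 * π / 3 * S * sineArch a b t ≤ 2 * π / 3 * S :=
    mul_le_of_le_one_right (by positivity) (sineArch_le_one t)
  linarith [pi_gt_three]

theorem lidstone_q_parameter_derivative_bound_general
    (p N : ℕ)
    (x : ℕ → ℝ)
    (y : ℕ → ℕ → ℝ)
    (ρ : ℝ)
    (hρ : ρ = (Finset.range (p + 1)).sup'
      (Finset.nonempty_range_iff.mpr p.succ_ne_zero)
      (fun k => max |y 0 k| |y N k|))
    (n : ℕ)
    (q : ℝ → ℝ → ℝ)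
    (hq : ∀ β : ℝ,
      (∃ P : Polynomial ℝ, P.natDegree ≤ 2 * p + 1 ∧ ∀ t, q β t = P.eval t) ∧
      ∀ l ≤ p,
        iteratedDeriv (2 * l) (q β) (x 0) =
          ((x n - x (n - 1)) / (x N - x 0)) ^ (2 * l) * y (n - 1) l - β * y 0 l ∧
        iteratedDeriv (2 * l) (q β) (x N) =
          ((x n - x (n - 1)) / (x N - x 0)) ^ (2 * l) * y n l - β * y N l)
    (k : ℕ) (hk : k ≤ p) (α' α'' : ℝ) (t : ℝ) (ht : t ∈ Set.Icc (x 0) (x N)) :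
    |iteratedDeriv (2 * k) (fun s => q α' s - q α'' s) t| ≤
      |α' - α''| * (2 * ρ * Real.pi / 3) *
        ∑ l ∈ Finset.range (p - k + 1), ((x N - x 0) / Real.pi) ^ (2 * l) := by
  obtain ⟨⟨P₁, hP₁, hq₁⟩, hq₁_ends⟩ := hq α'
  obtain ⟨⟨P₂, hP₂, hq₂⟩, hq₂_ends⟩ := hq α''
  have hR (l : ℕ) (s : ℝ) : (derivative^[l] (P₁ - P₂)).eval s =
      iteratedDeriv l (q α') s - iteratedDeriv l (q α'') s := by
    rw [funext hq₁, funext hq₂, iteratedDeriv_eval_eq_eval_iterate_derivative,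
      iteratedDeriv_eval_eq_eval_iterate_derivative, iterate_derivative_sub, eval_sub]
  have hR_ends (l : ℕ) (hl : l ≤ p) :
      (derivative^[2 * l] (P₁ - P₂)).eval (x 0) = (α'' - α') * y 0 l ∧
        (derivative^[2 * l] (P₁ - P₂)).eval (x N) = (α'' - α') * y N l := by
    rw [hR, hR, (hq₁_ends l hl).1, (hq₁_ends l hl).2, (hq₂_ends l hl).1, (hq₂_ends l hl).2]
    constructor <;> ring
  have hρ_ge (l : ℕ) (hl : l ≤ p) : |y 0 l| ≤ ρ ∧ |y N l| ≤ ρ :=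
    max_le_iff.1 (hρ ▸ Finset.le_sup' (fun k => max |y 0 k| |y N k|)
      (Finset.mem_range.2 (Nat.lt_succ_of_le hl)))
  have hdeg : (derivative^[2 * k] (P₁ - P₂)).natDegree ≤ 2 * (p - k) + 1 :=
    (natDegree_iterate_derivative _ _).trans
      (by have := (natDegree_sub_le P₁ P₂).trans (max_le hP₁ hP₂); omega)
  have hdiff : (fun s => q α' s - q α'' s) = fun s => (P₁ - P₂).eval s := by
    simp [hq₁, hq₂]
  rw [hdiff, iteratedDeriv_eval_eq_eval_iterate_derivative]
  refine (abs_eval_le_geom_sum (M := |α' - α''| * ρ) (p - k) _ hdeg (fun j hj => ?_) ht).trans_eq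
    (by ring)
  obtain ⟨h0, hN⟩ := hρ_ge (j + k) (by omega)
  rw [← Function.iterate_add_apply, ← mul_add, (hR_ends (j + k) (by omega)).1,
    (hR_ends (j + k) (by omega)).2, abs_mul, abs_mul, abs_sub_comm α'']
  exact ⟨mul_le_mul_of_nonneg_left h0 (abs_nonneg _), mul_le_mul_of_nonneg_left hN (abs_nonneg _)⟩

/-- For the Lidstone interpolating polynomials `q n (β, ·)` (of degree at most
`2p+1`, with derivative data depending affinely on the scaling parameter `β`),
the `2k`-th derivative of the difference `q n (α', ·) - q n (α'', ·)` is bounded by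
`|α' - α''| · (2ρπ/3) · ∑_{l=0}^{p-k} ((x N - x 0)/π)^(2l)` on `[x 0, x N]`,
where `ρ = max_{0 ≤ k ≤ p} max {|y 0 k|, |y N k|}`. -/
theorem lidstone_q_parameter_derivative_bound
    (p N : ℕ) (hp : 1 ≤ p) (hN : 1 ≤ N)
    (x : ℕ → ℝ) (hx : ∀ n < N, x n < x (n + 1))
    (y : ℕ → ℕ → ℝ)
    (ρ : ℝ)
    (hρ : ρ = (Finset.range (p + 1)).sup'
      (Finset.nonempty_range_iff.mpr p.succ_ne_zero)
      (fun k => max |y 0 k| |y N k|))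
    (n : ℕ) (hn1 : 1 ≤ n) (hn2 : n ≤ N)
    (q : ℝ → ℝ → ℝ)
    (hq : ∀ β : ℝ,
      (∃ P : Polynomial ℝ, P.natDegree ≤ 2 * p + 1 ∧ ∀ t, q β t = P.eval t) ∧
      ∀ l ≤ p,
        iteratedDeriv (2 * l) (q β) (x 0) =
          ((x n - x (n - 1)) / (x N - x 0)) ^ (2 * l) * y (n - 1) l - β * y 0 l ∧
        iteratedDeriv (2 * l) (q β) (x N) =
          ((x n - x (n - 1)) / (x N - x 0)) ^ (2 * l) * y n l - β * y N l)
    (k : ℕ) (hk : k ≤ p) (α' α'' : ℝ) (t : ℝ) (ht : t ∈ Set.Icc (x 0) (x N)) :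
    |iteratedDeriv (2 * k) (fun s => q α' s - q α'' s) t| ≤
      |α' - α''| * (2 * ρ * Real.pi / 3) *
        ∑ l ∈ Finset.range (p - k + 1), ((x N - x 0) / Real.pi) ^ (2 * l) :=
  lidstone_q_parameter_derivative_bound_general p N x y ρ hρ n q hq k hk α' α'' t ht
end

section
/- Fix integers p ≥ 1 and N ≥ 1, a partition x_0 < x_1 < ⋯ < x_N, and data y_{n,2k} ∈ ℝ (0 ≤ n ≤ N, 0 ≤ k ≤ p). Let α', α'' ∈ Θ_{2p}, and let ℓ_{α'} and ℓ_{α''} be continuous functions on [x_0,x_N] satisfying ℓ_{α'}(L_n(x)) = α'_n ℓ_{α'}(x) + q_n(α'_n, x) and ℓ_{α''}(L_n(x)) = α''_n ℓ_{α''}(x) + q_n(α''_n, x) for all x ∈ [x_0,x_N] and 1 ≤ n ≤ N. Then ‖ℓ_{α'} − ℓ_{α''}‖_∞ ≤ (|α' − α''|_∞ / (1 − |α'|_∞)) · (‖ℓ_{α''}‖_∞ + M_{0,2p}), where |α|_∞ = max_n |α_n|, ‖·‖_∞ denotes the supremum norm over [x_0,x_N], and M_{0,2p} = (2ρπ/3)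 Σ_{l=0}^{p} ((x_N − x_0)/π)^{2l}. -/
/-!
Subtracting the two self-affine equations at `L_n s` gives
`(ℓ' - ℓ'')(L_n s) = α'_n (ℓ' - ℓ'')(s) + (α'_n - α''_n) ℓ''(s) + (q_n(α'_n) - q_n(α''_n))(s)`.
The maps `L_n` cover `[x_0, x_N]`, so
`‖ℓ' - ℓ''‖ ≤ |α'|_∞ ‖ℓ' - ℓ''‖ + |α' - α''|_∞ (‖ℓ''‖ + M_{0,2p})` once
`|α' - α''|_∞ M_{0,2p}` bounds `q_n(α'_n) - q_n(α''_n)`; as `|α'|_∞ < 1`, this rearranges to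
the claim.

That difference is a polynomial of degree `≤ 2p + 1` whose even derivatives at both endpoints are
bounded by `|α' - α''|_∞ ρ`, and such a polynomial is bounded by a maximum principle, one pair of
derivatives at a time: if `|P''| ≤ ρ + B sin (π (t - a) / (b - a))`, then
`ρ + ρ (t - a) (b - t) / 2 + B ((b - a) / π)² sin (π (t - a) / (b - a)) ± P` is concave and
nonnegative at `a` and `b`, hence nonnegative. Since the sine is the first Dirichlet eigenfunction
of `-d²/dt²` on `[a, b]`, each level costs exactly a factor `((b - a) / π)²`.
-/

open Polynomial Set Real

theorem Real.mul_pi_sub_div_pi_le_sin {x : ℝ} (h0 : 0 ≤ x) (hxπ : x ≤ π) :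
    x * (π - x) / π ≤ sin x := by
  have of_le_half_pi : ∀ x : ℝ, 0 ≤ x → x ≤ π / 2 → x * (π - x) / π ≤ sin x := by
    intro x h0 h1
    have h6 : π * x ≤ 6 := by nlinarith [mul_le_mul_of_nonneg_left h1 pi_pos.le, pi_lt_d2]
    have hcube : x ^ 3 / 6 ≤ x ^ 2 / π := by
      rw [div_le_div_iff₀ (by norm_num) pi_pos]
      nlinarith [mul_nonneg (sq_nonneg x) (sub_nonneg.2 h6)]
    have : x * (π - x) / π = x - x ^ 2 / π := by field_simp
    linarith [sin_ge_sub_cube h0]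
  rcases le_total x (π / 2) with h | h
  · exact of_le_half_pi x h0 h
  · have := of_le_half_pi (π - x) (by linarith) (by linarith)
    rwa [sin_pi_sub, sub_sub_cancel, mul_comm] at this

theorem mul_sub_le_sq_div_pi_mul_sin {a b t : ℝ} (hab : a < b) (ht : t ∈ Icc a b) :
    (t - a) * (b - t) ≤ (b - a) ^ 2 / π * sin (π / (b - a) * (t - a)) := by
  have hba : 0 < b - a := sub_pos.2 hab
  have hsin := mul_pi_sub_div_pi_le_sin (x := π / (b - a) * (t - a))
    (mul_nonneg (div_nonneg pi_pos.le hba.le) (sub_nonneg.2 ht.1))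
    (by rw [div_mul_eq_mul_div, div_le_iff₀ hba]; nlinarith [ht.2, pi_pos])
  calc (t - a) * (b - t)
      = (b - a) ^ 2 / π * (π / (b - a) * (t - a) * (π - π / (b - a) * (t - a)) / π) := by
        field_simp; ring
    _ ≤ _ := by gcongr

theorem nonneg_of_hasDerivAt2_nonpos {a b t : ℝ} {g g' g'' : ℝ → ℝ}
    (hg : ∀ s, HasDerivAt g (g' s) s) (hg' : ∀ s, HasDerivAt g' (g'' s) s)
    (hg'' : ∀ s ∈ Ioo a b, g'' s ≤ 0) (ha : 0 ≤ g a) (hb : 0 ≤ g b) (ht : t ∈ Icc a b) :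
    0 ≤ g t := by
  have hab : a ≤ b := ht.1.trans ht.2
  have hconc : ConcaveOn ℝ (Icc a b) g := by
    refine concaveOn_of_hasDerivWithinAt2_nonpos (convex_Icc a b)
      (HasDerivAt.continuousOn fun s _ => hg s) (fun s _ => (hg s).hasDerivWithinAt)
      (fun s _ => (hg' s).hasDerivWithinAt) ?_
    rwa [interior_Icc]
  exact (le_min ha hb).trans <| hconc.ge_on_segment (left_mem_Icc.2 hab) (right_mem_Icc.2 hab)
    (by rwa [segment_eq_Icc hab])

theorem abs_le_of_abs_deriv2_le_add_mul_sin {a b t ρ₀ ρ₂ B : ℝ} {f f' f'' : ℝ → ℝ} (hab : a < b)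
    (hf : ∀ s, HasDerivAt f (f' s) s) (hf' : ∀ s, HasDerivAt f' (f'' s) s)
    (h'' : ∀ s ∈ Icc a b, |f'' s| ≤ ρ₂ + B * sin (π / (b - a) * (s - a)))
    (ha : |f a| ≤ ρ₀) (hb : |f b| ≤ ρ₀) (ht : t ∈ Icc a b) :
    |f t| ≤ ρ₀ + (ρ₂ * π / 2 + B) * ((b - a) / π) ^ 2 * sin (π / (b - a) * (t - a)) := by
  have hba : b - a ≠ 0 := (sub_pos.2 hab).ne'
  set c := π / (b - a) with hc
  set K := B * ((b - a) / π) ^ 2 with hK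
  have hKc : K * c ^ 2 = B := by rw [hK, hc]; field_simp
  set φ : ℝ → ℝ := fun s => ρ₀ + ρ₂ / 2 * ((s - a) * (b - s)) + K * sin (c * (s - a))
  set φ' : ℝ → ℝ := fun s => ρ₂ / 2 * (a + b - 2 * s) + K * c * cos (c * (s - a))
  set φ'' : ℝ → ℝ := fun s => -ρ₂ - K * c ^ 2 * sin (c * (s - a))
  have hlin (s : ℝ) : HasDerivAt (fun s => c * (s - a)) c s := by
    simpa using ((hasDerivAt_id s).sub_const a).const_mul c
  have hφ (s : ℝ) : HasDerivAt φ (φ' s) s := by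
    have := ((((hasDerivAt_id s).sub_const a).mul ((hasDerivAt_id s).const_sub b)).const_mul
      (ρ₂ / 2)).const_add ρ₀ |>.add (((hasDerivAt_sin _).comp s (hlin s)).const_mul K)
    exact this.congr_deriv (by simp only [φ', id]; ring)
  have hφ' (s : ℝ) : HasDerivAt φ' (φ'' s) s := by
    have := (((hasDerivAt_id s).const_mul 2).const_sub (a + b)).const_mul (ρ₂ / 2)
      |>.add (((hasDerivAt_cos _).comp s (hlin s)).const_mul (K * c))
    exact this.congr_deriv (by simp only [φ'']; ring)
  have hρ₂ : 0 ≤ ρ₂ := by simpa using (abs_nonneg _).trans (h'' a ⟨le_rfl, hab.le⟩)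
  have hφ'' : ∀ s ∈ Ioo a b, φ'' s + |f'' s| ≤ 0 := fun s hs => by
    have := h'' s (Ioo_subset_Icc_self hs)
    simp only [φ'', hKc]; linarith
  have hφa : φ a = ρ₀ := by simp [φ]
  have hφb : φ b = ρ₀ := by simp [φ, hc, div_mul_cancel₀ _ hba]
  have upper : f t ≤ φ t := sub_nonneg.1 <| nonneg_of_hasDerivAt2_nonpos (g := φ - f)
    (fun s => (hφ s).sub (hf s)) (fun s => (hφ' s).sub (hf' s))
    (fun s hs => by linarith [hφ'' s hs, neg_le_abs (f'' s)])
    (by rw [Pi.sub_apply, hφa]; linarith [le_abs_self (f a)])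
    (by rw [Pi.sub_apply, hφb]; linarith [le_abs_self (f b)]) ht
  have lower : -f t ≤ φ t := neg_le_iff_add_nonneg.2 <| nonneg_of_hasDerivAt2_nonpos (g := φ + f)
    (fun s => (hφ s).add (hf s)) (fun s => (hφ' s).add (hf' s))
    (fun s hs => by linarith [hφ'' s hs, le_abs_self (f'' s)])
    (by rw [Pi.add_apply, hφa]; linarith [neg_abs_le (f a)])
    (by rw [Pi.add_apply, hφb]; linarith [neg_abs_le (f b)]) ht
  calc |f t| ≤ φ t := abs_le'.2 ⟨upper, lower⟩
    _ ≤ ρ₀ + ρ₂ / 2 * ((b - a) ^ 2 / π * sin (c * (t - a))) + K * sin (c * (t - a)) := by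
      simp only [φ]
      gcongr ρ₀ + ρ₂ / 2 * ?_ + _
      exact mul_sub_le_sq_div_pi_mul_sin hab ht
    _ = _ := by rw [hK]; field_simp; ring

theorem Polynomial.iteratedDeriv_eval_s10 {𝕜 : Type*} [NontriviallyNormedField 𝕜] (P : 𝕜[X])
    (k : ℕ) : iteratedDeriv k (fun t => P.eval t) = fun t => (derivative^[k] P).eval t := by
  induction k generalizing P with
  | zero => simp
  | succ k ih =>
    have hderiv : _root_.deriv (fun t => P.eval t) = fun t => (derivative P).eval t := by
      ext t; exact Polynomial.deriv P
    rw [iteratedDeriv_succ', hderiv, ih, Function.iterate_succ_apply]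

theorem Polynomial.abs_eval_le_add_mul_sin {a b ρ t : ℝ} (hab : a < b) (k : ℕ) {P : ℝ[X]}
    (hP : P.natDegree ≤ 2 * k + 1)
    (hdata : ∀ l ≤ k, |(derivative^[2 * l] P).eval a| ≤ ρ ∧ |(derivative^[2 * l] P).eval b| ≤ ρ)
    (ht : t ∈ Icc a b) :
    |P.eval t| ≤ ρ + ρ * π / 2 * (((b - a) / π) ^ 2 * ∑ l ∈ Finset.range k, (((b - a) / π) ^ 2) ^ l)
      * sin (π / (b - a) * (t - a)) := by
  induction k generalizing P t with
  | zero =>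
    have hP'' : derivative^[2] P = 0 := iterate_derivative_eq_zero (by omega)
    simpa using abs_le_of_abs_deriv2_le_add_mul_sin (ρ₂ := 0) (B := 0) hab
      (fun s => P.hasDerivAt s) (fun s => (derivative P).hasDerivAt s)
      (f'' := fun s => (derivative^[2] P).eval s) (by simp [hP''])
      (hdata 0 le_rfl).1 (hdata 0 le_rfl).2 ht
  | succ k ih =>
    have hP'' : ∀ s ∈ Icc a b, |(derivative^[2] P).eval s| ≤ ρ + ρ * π / 2 *
        (((b - a) / π) ^ 2 * ∑ l ∈ Finset.range k, (((b - a) / π) ^ 2) ^ l)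
          * sin (π / (b - a) * (s - a)) := by
      refine fun s hs => ih ((natDegree_iterate_derivative P 2).trans (by omega))
        (fun l hl => ?_) hs
      rw [← Function.iterate_add_apply, show 2 * l + 2 = 2 * (l + 1) by ring]
      exact hdata (l + 1) (by omega)
    convert abs_le_of_abs_deriv2_le_add_mul_sin hab (fun s => P.hasDerivAt s)
      (fun s => (derivative P).hasDerivAt s) (f'' := fun s => (derivative^[2] P).eval s) hP''
      (hdata 0 (by omega)).1 (hdata 0 (by omega)).2 ht using 2
    rw [geom_sum_succ]
    ring

theorem Polynomial.abs_eval_le_lidstone_bound {a b ρ t : ℝ} (hab : a < b) (k : ℕ) {P : ℝ[X]}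
    (hP : P.natDegree ≤ 2 * k + 1)
    (hdata : ∀ l ≤ k, |(derivative^[2 * l] P).eval a| ≤ ρ ∧ |(derivative^[2 * l] P).eval b| ≤ ρ)
    (ht : t ∈ Icc a b) :
    |P.eval t| ≤ 2 * ρ * π / 3 * ∑ l ∈ Finset.range (k + 1), ((b - a) / π) ^ (2 * l) := by
  have hρ : 0 ≤ ρ := (abs_nonneg _).trans (hdata 0 (Nat.zero_le k)).1
  set r := ((b - a) / π) ^ 2
  have hG : 0 ≤ r * ∑ l ∈ Finset.range k, r ^ l := by positivity
  have hsin := sin_le_one (π / (b - a) * (t - a))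
  have hπ := pi_gt_three
  calc |P.eval t|
        ≤ ρ + ρ * π / 2 * (r * ∑ l ∈ Finset.range k, r ^ l) * sin (π / (b - a) * (t - a)) :=
          abs_eval_le_add_mul_sin hab k hP hdata ht
    _ ≤ 2 * ρ * π / 3 * (r * ∑ l ∈ Finset.range k, r ^ l + 1) := by
        nlinarith [mul_nonneg hρ hG, mul_nonneg (mul_nonneg hρ hG) (sub_nonneg.2 hsin)]
    _ = _ := by simp only [pow_mul, r, geom_sum_succ]

theorem abs_sub_le_lidstone_bound_of_iteratedDeriv {a b ρ t : ℝ} (hab : a < b) (k : ℕ)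
    {f g : ℝ → ℝ} (hf : ∃ P : ℝ[X], P.natDegree ≤ 2 * k + 1 ∧ ∀ t, f t = P.eval t)
    (hg : ∃ Q : ℝ[X], Q.natDegree ≤ 2 * k + 1 ∧ ∀ t, g t = Q.eval t)
    (hdata : ∀ l ≤ k, |iteratedDeriv (2 * l) f a - iteratedDeriv (2 * l) g a| ≤ ρ ∧
      |iteratedDeriv (2 * l) f b - iteratedDeriv (2 * l) g b| ≤ ρ)
    (ht : t ∈ Icc a b) :
    |f t - g t| ≤ 2 * ρ * π / 3 * ∑ l ∈ Finset.range (k + 1), ((b - a) / π) ^ (2 * l) := by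
  obtain ⟨P, hP, hfP⟩ := hf
  obtain ⟨Q, hQ, hgQ⟩ := hg
  obtain rfl : f = fun t => P.eval t := funext hfP
  obtain rfl : g = fun t => Q.eval t := funext hgQ
  simp only [iteratedDeriv_eval_s10, ← eval_sub, ← iterate_derivative_sub] at hdata ⊢
  exact (P - Q).abs_eval_le_lidstone_bound hab k
    ((natDegree_sub_le P Q).trans (max_le hP hQ)) hdata ht

theorem abs_sub_le_lidstone_bound_of_scaling {a b ρ δ β γ t : ℝ} (hab : a < b) (k : ℕ)
    {f g : ℝ → ℝ} {c d z w : ℕ → ℝ}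
    (hf : ∃ P : ℝ[X], P.natDegree ≤ 2 * k + 1 ∧ ∀ t, f t = P.eval t)
    (hg : ∃ Q : ℝ[X], Q.natDegree ≤ 2 * k + 1 ∧ ∀ t, g t = Q.eval t)
    (hfd : ∀ l ≤ k, iteratedDeriv (2 * l) f a = c l - β * z l ∧
      iteratedDeriv (2 * l) f b = d l - β * w l)
    (hgd : ∀ l ≤ k, iteratedDeriv (2 * l) g a = c l - γ * z l ∧
      iteratedDeriv (2 * l) g b = d l - γ * w l)
    (hβγ : |β - γ| ≤ δ) (hzw : ∀ l ≤ k, |z l| ≤ ρ ∧ |w l| ≤ ρ) (ht : t ∈ Icc a b) :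
    |f t - g t| ≤ δ * (2 * ρ * π / 3 * ∑ l ∈ Finset.range (k + 1), ((b - a) / π) ^ (2 * l)) := by
  have hdiff {u v : ℝ} (hv : |v| ≤ ρ) : |(u - β * v) - (u - γ * v)| ≤ δ * ρ := by
    rw [show (u - β * v) - (u - γ * v) = -((β - γ) * v) by ring, abs_neg, abs_mul]
    exact mul_le_mul hβγ hv (abs_nonneg v) ((abs_nonneg _).trans hβγ)
  refine (abs_sub_le_lidstone_bound_of_iteratedDeriv (ρ := δ * ρ) hab k hf hg (fun l hl => ?_)
    ht).trans_eq (by ring)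
  rw [(hfd l hl).1, (hfd l hl).2, (hgd l hl).1, (hgd l hl).2]
  exact ⟨hdiff (hzw l hl).1, hdiff (hzw l hl).2⟩

theorem abs_sub_le_of_eq_mul_add {α' α'' u' u'' v' v'' q' q'' : ℝ}
    (h' : u' = α' * v' + q') (h'' : u'' = α'' * v'' + q'') :
    |u' - u''| ≤ |α'| * |v' - v''| + |α' - α''| * |v''| + |q' - q''| := by
  rw [h', h'', ← abs_mul, ← abs_mul,
    show α' * v' + q' - (α'' * v'' + q'') = α' * (v' - v'') + (α' - α'') * v'' + (q' - q'') by ring]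
  exact abs_add_three _ _ _

theorem csSup_image_le_div_of_forall_exists_le {α : Type*} {I : Set α} {g : α → ℝ} {A B : ℝ}
    (hbdd : BddAbove (g '' I)) (hI : I.Nonempty) (hA₀ : 0 ≤ A) (hA₁ : A < 1)
    (h : ∀ u ∈ I, ∃ v ∈ I, g u ≤ A * g v + B) : sSup (g '' I) ≤ B / (1 - A) := by
  rw [le_div_iff₀ (sub_pos.2 hA₁)]
  have : sSup (g '' I) ≤ A * sSup (g '' I) + B := csSup_le (hI.image g) <| by
    rintro _ ⟨u, hu, rfl⟩
    obtain ⟨v, hv, huv⟩ := h u hu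
    exact huv.trans (by gcongr; exact le_csSup hbdd (mem_image_of_mem g hv))
  linarith

theorem image_affine_Icc_eq_Icc {c d e f : ℝ} (hcd : c < d) (hef : e < f) :
    (fun s => (f - e) / (d - c) * s + (d * e - c * f) / (d - c)) '' Icc c d = Icc e f := by
  have hdc : d - c ≠ 0 := (sub_pos.2 hcd).ne'
  rw [image_affine_Icc' (div_pos (sub_pos.2 hef) (sub_pos.2 hcd))]
  congr 1 <;> field_simp <;> ring

theorem exists_mem_Icc_pred_of_mem_Icc (x : ℕ → ℝ) {t : ℝ} {N : ℕ} (hN : 1 ≤ N)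
    (ht : t ∈ Icc (x 0) (x N)) : ∃ n ∈ Finset.Icc 1 N, t ∈ Icc (x (n - 1)) (x n) := by
  induction N, hN using Nat.le_induction with
  | base => exact ⟨1, by simp, ht⟩
  | succ N hN ih =>
    by_cases htN : t ≤ x N
    · obtain ⟨n, hn, htn⟩ := ih ⟨ht.1, htN⟩
      exact ⟨n, Finset.Icc_subset_Icc_right N.le_succ hn, htn⟩
    · exact ⟨N + 1, by simp, (not_le.1 htN).le, ht.2⟩

theorem StrictMonoOn.sub_pred_pos {x : ℕ → ℝ} {N n : ℕ} (hx : StrictMonoOn x (Iic N))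
    (hn : n ∈ Finset.Icc 1 N) : 0 < x n - x (n - 1) := by
  obtain ⟨h1, hN⟩ := Finset.mem_Icc.1 hn
  exact sub_pos.2 <| hx (by simp; omega) (by simpa using hN) (by omega)

theorem StrictMonoOn.div_sub_pow_le_one {x : ℕ → ℝ} {N n : ℕ} (hx : StrictMonoOn x (Iic N))
    (hn : n ∈ Finset.Icc 1 N) (m : ℕ) : ((x n - x (n - 1)) / (x N - x 0)) ^ m ≤ 1 := by
  obtain ⟨h1, hN⟩ := Finset.mem_Icc.1 hn
  have hpos := hx.sub_pred_pos hn
  have h0 : x 0 ≤ x (n - 1) := hx.monotoneOn (by simp) (by simp; omega) (Nat.zero_le _)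
  have hnN : x n ≤ x N := hx.monotoneOn (by simpa using hN) (by simp) hN
  exact pow_le_one₀ (div_nonneg hpos.le (by linarith))
    (div_le_one_of_le₀ (by linarith) (by linarith))

theorem lidstone_FIF_scaling_continuity_general
    (p N : ℕ) (hN : 1 ≤ N)
    (x : ℕ → ℝ) (hx : ∀ n < N, x n < x (n + 1))
    (y : ℕ → ℕ → ℝ)
    (L : ℕ → ℝ → ℝ)
    (hL : ∀ n t, L n t = ((x n - x (n - 1)) / (x N - x 0)) * t +
      (x N * x (n - 1) - x 0 * x n) / (x N - x 0))
    (q : ℕ → ℝ → ℝ → ℝ)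
    (hq : ∀ n, 1 ≤ n → n ≤ N → ∀ β : ℝ,
      (∃ P : Polynomial ℝ, P.natDegree ≤ 2 * p + 1 ∧ ∀ t, q n β t = P.eval t) ∧
      ∀ l ≤ p,
        iteratedDeriv (2 * l) (q n β) (x 0) =
          ((x n - x (n - 1)) / (x N - x 0)) ^ (2 * l) * y (n - 1) l - β * y 0 l ∧
        iteratedDeriv (2 * l) (q n β) (x N) =
          ((x n - x (n - 1)) / (x N - x 0)) ^ (2 * l) * y n l - β * y N l)
    (α' α'' : ℕ → ℝ)
    (hα' : ∀ n, 1 ≤ n → n ≤ N →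
      |α' n| < ((x n - x (n - 1)) / (x N - x 0)) ^ (2 * p))
    (ℓ' ℓ'' : ℝ → ℝ)
    (hℓ'cont : ContinuousOn ℓ' (Set.Icc (x 0) (x N)))
    (hℓ''cont : ContinuousOn ℓ'' (Set.Icc (x 0) (x N)))
    (hℓ' : ∀ n, 1 ≤ n → n ≤ N → ∀ t ∈ Set.Icc (x 0) (x N),
      ℓ' (L n t) = α' n * ℓ' t + q n (α' n) t)
    (hℓ'' : ∀ n, 1 ≤ n → n ≤ N → ∀ t ∈ Set.Icc (x 0) (x N),
      ℓ'' (L n t) = α'' n * ℓ'' t + q n (α'' n) t)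
    (ρ dα Aα : ℝ)
    (hρ : ρ = (Finset.range (p + 1)).sup'
      (Finset.nonempty_range_iff.mpr p.succ_ne_zero)
      (fun k => max |y 0 k| |y N k|))
    (hdα : dα = (Finset.Icc 1 N).sup' (Finset.nonempty_Icc.mpr hN)
      (fun n => |α' n - α'' n|))
    (hAα : Aα = (Finset.Icc 1 N).sup' (Finset.nonempty_Icc.mpr hN)
      (fun n => |α' n|)) :
    sSup ((fun t => |ℓ' t - ℓ'' t|) '' Set.Icc (x 0) (x N)) ≤
      (dα / (1 - Aα)) *
        (sSup ((fun t => |ℓ'' t|) '' Set.Icc (x 0) (x N)) +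
          (2 * ρ * Real.pi / 3) *
            ∑ l ∈ Finset.range (p + 1), ((x N - x 0) / Real.pi) ^ (2 * l)) := by
  have hmono : StrictMonoOn x (Set.Iic N) := strictMonoOn_Iic_of_lt_succ fun m hm => hx m hm
  have h0N : x 0 < x N := hmono (by simp) (by simp) (by omega)
  have hd : ∀ n ∈ Finset.Icc 1 N, |α' n - α'' n| ≤ dα := fun n hn =>
    hdα ▸ Finset.le_sup' (fun n => |α' n - α'' n|) hn
  have hA : ∀ n ∈ Finset.Icc 1 N, |α' n| ≤ Aα := fun n hn =>
    hAα ▸ Finset.le_sup' (fun n => |α' n|) hn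
  have hA₁ : Aα < 1 := hAα ▸ (Finset.sup'_lt_iff _).2 fun n hn =>
    (hα' n (Finset.mem_Icc.1 hn).1 (Finset.mem_Icc.1 hn).2).trans_le
      (hmono.div_sub_pow_le_one hn _)
  have hy : ∀ l ≤ p, |y 0 l| ≤ ρ ∧ |y N l| ≤ ρ := fun l hl =>
    max_le_iff.1 (hρ ▸ Finset.le_sup' (fun k => max |y 0 k| |y N k|) (by simp; omega))
  rw [div_mul_eq_mul_div]
  refine csSup_image_le_div_of_forall_exists_le
    (isCompact_Icc.bddAbove_image (hℓ'cont.sub hℓ''cont).abs) (Set.nonempty_Icc.2 h0N.le)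
    ((abs_nonneg _).trans (hA 1 (by simp; omega))) hA₁ fun u hu => ?_
  obtain ⟨n, hn, hun⟩ := exists_mem_Icc_pred_of_mem_Icc x hN hu
  rw [← image_affine_Icc_eq_Icc h0N (sub_pos.1 (hmono.sub_pred_pos hn)), ← funext (hL n)] at hun
  obtain ⟨s, hs, rfl⟩ := hun
  obtain ⟨h1, h2⟩ := Finset.mem_Icc.1 hn
  have hq_diff := abs_sub_le_lidstone_bound_of_scaling h0N p (hq n h1 h2 (α' n)).1
    (hq n h1 h2 (α'' n)).1 (hq n h1 h2 _).2 (hq n h1 h2 _).2 (hd n hn) hy hs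
  have hS := le_csSup (isCompact_Icc.bddAbove_image hℓ''cont.abs)
    (Set.mem_image_of_mem (fun t => |ℓ'' t|) hs)
  refine ⟨s, hs, (abs_sub_le_of_eq_mul_add (hℓ' n h1 h2 s hs) (hℓ'' n h1 h2 s hs)).trans ?_⟩
  have := mul_le_mul_of_nonneg_right (hA n hn) (abs_nonneg (ℓ' s - ℓ'' s))
  have := mul_le_mul (hd n hn) hS (abs_nonneg _) ((abs_nonneg _).trans (hd n hn))
  linarith

/-- Continuous dependence of the Lidstone FIF on the scaling vector:
`‖ℓ_{α'} - ℓ_{α''}‖_∞ ≤ (|α' - α''|_∞ / (1 - |α'|_∞)) (‖ℓ_{α''}‖_∞ + M_{0,2p})`,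
where `M_{0,2p} = (2ρπ/3) ∑_{l=0}^{p} ((x N - x 0)/π)^(2l)` and
`ρ = max_{0 ≤ k ≤ p} max {|y 0 k|, |y N k|}`. -/
theorem lidstone_FIF_scaling_continuity
    (p N : ℕ) (hp : 1 ≤ p) (hN : 1 ≤ N)
    (x : ℕ → ℝ) (hx : ∀ n < N, x n < x (n + 1))
    (y : ℕ → ℕ → ℝ)
    (L : ℕ → ℝ → ℝ)
    (hL : ∀ n t, L n t = ((x n - x (n - 1)) / (x N - x 0)) * t +
      (x N * x (n - 1) - x 0 * x n) / (x N - x 0))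
    (q : ℕ → ℝ → ℝ → ℝ)
    (hq : ∀ n, 1 ≤ n → n ≤ N → ∀ β : ℝ,
      (∃ P : Polynomial ℝ, P.natDegree ≤ 2 * p + 1 ∧ ∀ t, q n β t = P.eval t) ∧
      ∀ l ≤ p,
        iteratedDeriv (2 * l) (q n β) (x 0) =
          ((x n - x (n - 1)) / (x N - x 0)) ^ (2 * l) * y (n - 1) l - β * y 0 l ∧
        iteratedDeriv (2 * l) (q n β) (x N) =
          ((x n - x (n - 1)) / (x N - x 0)) ^ (2 * l) * y n l - β * y N l)
    (α' α'' : ℕ → ℝ)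
    (hα' : ∀ n, 1 ≤ n → n ≤ N →
      |α' n| < ((x n - x (n - 1)) / (x N - x 0)) ^ (2 * p))
    (hα'' : ∀ n, 1 ≤ n → n ≤ N →
      |α'' n| < ((x n - x (n - 1)) / (x N - x 0)) ^ (2 * p))
    (ℓ' ℓ'' : ℝ → ℝ)
    (hℓ'cont : ContinuousOn ℓ' (Set.Icc (x 0) (x N)))
    (hℓ''cont : ContinuousOn ℓ'' (Set.Icc (x 0) (x N)))
    (hℓ' : ∀ n, 1 ≤ n → n ≤ N → ∀ t ∈ Set.Icc (x 0) (x N),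
      ℓ' (L n t) = α' n * ℓ' t + q n (α' n) t)
    (hℓ'' : ∀ n, 1 ≤ n → n ≤ N → ∀ t ∈ Set.Icc (x 0) (x N),
      ℓ'' (L n t) = α'' n * ℓ'' t + q n (α'' n) t)
    (ρ dα Aα : ℝ)
    (hρ : ρ = (Finset.range (p + 1)).sup'
      (Finset.nonempty_range_iff.mpr p.succ_ne_zero)
      (fun k => max |y 0 k| |y N k|))
    (hdα : dα = (Finset.Icc 1 N).sup' (Finset.nonempty_Icc.mpr hN)
      (fun n => |α' n - α'' n|))
    (hAα : Aα = (Finset.Icc 1 N).sup' (Finset.nonempty_Icc.mpr hN)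
      (fun n => |α' n|)) :
    sSup ((fun t => |ℓ' t - ℓ'' t|) '' Set.Icc (x 0) (x N)) ≤
      (dα / (1 - Aα)) *
        (sSup ((fun t => |ℓ'' t|) '' Set.Icc (x 0) (x N)) +
          (2 * ρ * Real.pi / 3) *
            ∑ l ∈ Finset.range (p + 1), ((x N - x 0) / Real.pi) ^ (2 * l)) :=
  lidstone_FIF_scaling_continuity_general p N hN x hx y L hL q hq α' α'' hα' ℓ' ℓ'' hℓ'cont hℓ''cont
    hℓ' hℓ'' ρ dα Aα hρ hdα hAα
end
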